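/- arXiv:0912.2772 — 8 statements merged into one kernel-verified Lean document; each statement's English description precedes it below -/
import Mathlib

section
/- Let A : X ⇉ X* be a monotone linear relation. Then A is maximal monotone and symmetric if and only if there exists a proper lower semicontinuous convex function f : X → (−∞,+∞] such that Ax = ∂f(x) for every x ∈ X. -/
open Pointwise
open scoped Classical

noncomputable section

abbrev Dl (X : Type*) [NormedAddCommGroup X] [NormedSpace ℝ X] : Type _ :=
  StrongDual ℝ X

variable {X : Type*} [NormedAddCommGroup X] [NormedSpace ℝ X]

/-- The graph of a set-valued operator. -/
def graphOf (A : X → Set (Dl X)) : Set (X × Dl X) := {p | p.2 ∈ A p.1}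

/-- The domain of a set-valued operator. -/
def domOf (A : X → Set (Dl X)) : Set X := {x | (A x).Nonempty}

/-- Monotone set-valued operator. -/
def MonotoneOp (A : X → Set (Dl X)) : Prop :=
  ∀ ⦃x xs y ys⦄, xs ∈ A x → ys ∈ A y → 0 ≤ (xs - ys) (x - y)

/-- Maximal monotone set-valued operator. -/
def MaxMonotoneOp (A : X → Set (Dl X)) : Prop :=
  MonotoneOp A ∧ ∀ x xs, (∀ y ys, ys ∈ A y → 0 ≤ (xs - ys) (x - y)) → xs ∈ A x

/-- `A` is a linear relation: its graph is a linear subspace of `X × X*`. -/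
def IsLinearRelation (A : X → Set (Dl X)) : Prop :=
  (0 : Dl X) ∈ A 0 ∧
  (∀ x xs y ys, xs ∈ A x → ys ∈ A y → xs + ys ∈ A (x + y)) ∧
  (∀ (c : ℝ) x xs, xs ∈ A x → c • xs ∈ A (c • x))

/-- The adjoint of a linear relation. -/
def adjointRel (A : X → Set (Dl X)) : X → Set (Dl X) :=
  fun x => {xs | ∀ a as, as ∈ A a → xs a = as x}

/-- Skew linear relation. -/
def SkewOp (A : X → Set (Dl X)) : Prop := ∀ x xs, xs ∈ A x → xs x = 0

/-- Symmetric linear relation: `gra A ⊆ gra A*`. -/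
def SymOp (A : X → Set (Dl X)) : Prop := graphOf A ⊆ graphOf (adjointRel A)

/-- At most single-valued. -/
def AtMostSingleValued (A : X → Set (Dl X)) : Prop := ∀ x, (A x).Subsingleton

/-- The symmetric part `A₊ = ½A + ½A*` (pointwise). -/
def symPart (A : X → Set (Dl X)) : X → Set (Dl X) :=
  fun x => (2 : ℝ)⁻¹ • A x + (2 : ℝ)⁻¹ • adjointRel A x

/-- The skew part `A∘ = ½A − ½A*` (pointwise). -/
def skewPart (A : X → Set (Dl X)) : X → Set (Dl X) :=
  fun x => (2 : ℝ)⁻¹ • A x - (2 : ℝ)⁻¹ • adjointRel A x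

/-- Proper extended-real-valued function. -/
def ProperFun (f : X → EReal) : Prop := (∀ x, f x ≠ ⊥) ∧ ∃ x, f x ≠ ⊤

/-- Convex extended-real-valued function. -/
def ConvexFun (f : X → EReal) : Prop :=
  ∀ x y, ∀ a b : ℝ, 0 ≤ a → 0 ≤ b → a + b = 1 →
    f (a • x + b • y) ≤ (a : EReal) * f x + (b : EReal) * f y

/-- The subdifferential of an extended-real-valued function. -/
def subdiff (f : X → EReal) : X → Set (Dl X) :=
  fun x => {xs | ∀ y, (xs (y - x) : EReal) + f x ≤ f y}

/-- Borwein–Wiersma decomposability. -/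
def BWDecomposable (A : X → Set (Dl X)) : Prop :=
  ∃ (f : X → EReal) (S : X → Set (Dl X)),
    ProperFun f ∧ LowerSemicontinuous f ∧ ConvexFun f ∧
    IsLinearRelation S ∧ SkewOp S ∧ AtMostSingleValued S ∧
    ∀ x, A x = subdiff f x + S x

/-- The quadratic function `q_A` associated with a monotone linear relation:
`q_A x = ½⟨x, x*⟩` for any `x* ∈ Ax` (`+∞` if `Ax = ∅`). -/
def qA (A : X → Set (Dl X)) : X → EReal :=
  fun x => sInf {v : EReal | ∃ xs ∈ A x, v = (((2 : ℝ)⁻¹ * xs x : ℝ) : EReal)}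

/-- The lower semicontinuous hull: the largest lsc function majorized by `f`. -/
def lscHull (f : X → EReal) : X → EReal :=
  fun x => sSup {v : EReal | ∃ g : X → EReal,
    LowerSemicontinuous g ∧ (∀ y, g y ≤ f y) ∧ v = g x}

/-- The Fenchel conjugate. -/
def fenchel (f : X → EReal) : Dl X → EReal :=
  fun xs => ⨆ x, ((xs x : EReal) - f x)

/-- Indicator function (values in `(-∞, +∞]`). -/
def indFun (C : Set X) : X → EReal := fun x => if x ∈ C then 0 else ⊤

/-- `S` is a single-valued linear selection of the set-valued operator `B`. -/
def IsLinearSelection (S B : X → Set (Dl X)) : Prop :=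
  IsLinearRelation S ∧ AtMostSingleValued S ∧ domOf S = domOf B ∧ ∀ x, S x ⊆ B x

/-- Irreducible (acyclic) operator in the sense of Asplund. -/
def IrreducibleOp (A : X → Set (Dl X)) : Prop :=
  ∀ (f : X → EReal) (S : X → Set (Dl X)),
    ProperFun f → LowerSemicontinuous f → ConvexFun f → MonotoneOp S →
    (∀ x, A x = subdiff f x + S x) →
    ∃ p : Dl X, (⋃ x ∈ domOf A, subdiff f x) = {p}

/-- Asplund decomposability. -/
def AsplundDecomposable (A : X → Set (Dl X)) : Prop :=
  ∃ (f : X → EReal) (S : X → Set (Dl X)),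
    ProperFun f ∧ LowerSemicontinuous f ∧ ConvexFun f ∧
    IrreducibleOp S ∧ ∀ x, A x = subdiff f x + S x

/-- Reflexivity of a real normed space. -/
def ReflexiveReal (X : Type*) [NormedAddCommGroup X] [NormedSpace ℝ X] : Prop :=
  Function.Surjective (NormedSpace.inclusionInDoubleDual ℝ X)



namespace Aux

variable {X : Type*} [NormedAddCommGroup X] [NormedSpace ℝ X]

/-- If `f` is somewhere finite and `x` has a subgradient, then `f x` is finite. -/
lemma subdiff_ne_top {f : X → EReal} {x : X} {xs : Dl X} (hxs : xs ∈ subdiff f x)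
    {y₀ : X} (hy₀ : f y₀ ≠ ⊤) : f x ≠ ⊤ := by
  intro h
  have := hxs y₀
  rw [h] at this
  have h2 : ((xs (y₀ - x) : ℝ) : EReal) + ⊤ = ⊤ := by
    rw [EReal.add_top_iff_ne_bot]; exact EReal.coe_ne_bot _
  rw [h2, top_le_iff] at this
  exact hy₀ this

/-- Monotonicity of the subdifferential. -/
lemma subdiff_monotone {f : X → EReal} (hbot : ∀ z, f z ≠ ⊥) (hfin : ∃ y₀, f y₀ ≠ ⊤) :
    MonotoneOp (subdiff f) := by
  rintro x xs y ys hxs hys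
  obtain ⟨y₀, hy₀⟩ := hfin
  have hfx : f x ≠ ⊤ := subdiff_ne_top hxs hy₀
  have hfy : f y ≠ ⊤ := subdiff_ne_top hys hy₀
  obtain ⟨a, ha⟩ : ∃ r : ℝ, f x = (r : EReal) := ⟨(f x).toReal, (EReal.coe_toReal hfx (hbot x)).symm⟩
  obtain ⟨b, hb⟩ : ∃ r : ℝ, f y = (r : EReal) := ⟨(f y).toReal, (EReal.coe_toReal hfy (hbot y)).symm⟩
  have h1 := hxs y
  have h2 := hys x
  rw [ha, hb, ← EReal.coe_add, EReal.coe_le_coe_iff] at h1 h2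
  have : xs (y - x) + ys (x - y) ≤ 0 := by linarith
  have hexp : (xs - ys) (x - y) = -(xs (y - x) + ys (x - y)) := by
    simp [map_sub]; ring
  rw [hexp]; linarith

end Aux
section Fwd
variable {X : Type*} [NormedAddCommGroup X] [NormedSpace ℝ X]
variable (A : X → Set (Dl X))

/-- The supremum of the affine minorants determined by the graph of `A`. -/
def fA : X → EReal :=
  fun y => ⨆ p : graphOf A, ((p.1.2 y - 2⁻¹ * p.1.2 p.1.1 : ℝ) : EReal)

variable {A}

lemma fA_le {y : X} {c : EReal}
    (h : ∀ z zs, zs ∈ A z → ((zs y - 2⁻¹ * zs z : ℝ) : EReal) ≤ c) : fA A y ≤ c :=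
  iSup_le fun p => h p.1.1 p.1.2 p.2

lemma le_fA {z : X} {zs : Dl X} (hz : zs ∈ A z) (y : X) :
    ((zs y - 2⁻¹ * zs z : ℝ) : EReal) ≤ fA A y :=
  le_iSup (fun p : graphOf A => ((p.1.2 y - 2⁻¹ * p.1.2 p.1.1 : ℝ) : EReal)) ⟨(z, zs), hz⟩

lemma fA_nonneg (h0 : (0 : Dl X) ∈ A 0) (y : X) : (0 : EReal) ≤ fA A y := by
  have := le_fA h0 y
  simpa using this

lemma fA_lsc : LowerSemicontinuous (fA A) := by
  apply lowerSemicontinuous_iSup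
  intro p
  exact (continuous_coe_real_ereal.comp ((p.1.2.continuous).sub continuous_const)).lowerSemicontinuous

lemma fA_convex : ConvexFun (fA A) := by
  intro x y a b ha hb hab
  apply fA_le
  intro z zs hz
  have hterm : zs (a • x + b • y) - 2⁻¹ * zs z
      = a * (zs x - 2⁻¹ * zs z) + b * (zs y - 2⁻¹ * zs z) := by
    rw [map_add, map_smul, map_smul]; simp only [smul_eq_mul]
    have h2 : a * zs z + b * zs z = zs z := by rw [← add_mul, hab, one_mul]
    linarith
  rw [hterm, EReal.coe_add, EReal.coe_mul, EReal.coe_mul]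
  exact add_le_add
    (mul_le_mul_of_nonneg_left (le_fA hz x) (by exact_mod_cast ha))
    (mul_le_mul_of_nonneg_left (le_fA hz y) (by exact_mod_cast hb))

lemma fA_graph_val (hmono : MonotoneOp A) (hsym : SymOp A)
    {x : X} {xs : Dl X} (hx : xs ∈ A x) : fA A x = ((2⁻¹ * xs x : ℝ) : EReal) := by
  apply le_antisymm
  · apply fA_le
    intro z zs hz
    rw [EReal.coe_le_coe_iff]
    have hmon := hmono hx hz
    have hsymm : xs z = zs x := hsym (show (x, xs) ∈ graphOf A from hx) z zs hz
    have hexp : (xs - zs) (x - z) = xs x - xs z - zs x + zs z := by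
      simp [map_sub]; ring
    rw [hexp, hsymm] at hmon
    linarith
  · have := le_fA hx x
    have h2 : xs x - 2⁻¹ * xs x = 2⁻¹ * xs x := by ring
    rwa [h2] at this

lemma fA_proper (h0 : (0 : Dl X) ∈ A 0) (hmono : MonotoneOp A) (hsym : SymOp A) :
    ProperFun (fA A) := by
  constructor
  · intro y
    exact fun h => by simpa [h] using fA_nonneg h0 y
  · refine ⟨0, ?_⟩
    rw [fA_graph_val hmono hsym h0]
    simp

lemma fA_mem_subdiff (hmono : MonotoneOp A) (hsym : SymOp A)
    {x : X} {xs : Dl X} (hx : xs ∈ A x) : xs ∈ subdiff (fA A) x := by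
  intro y
  rw [fA_graph_val hmono hsym hx, ← EReal.coe_add]
  have : xs (y - x) + 2⁻¹ * xs x = xs y - 2⁻¹ * xs x := by
    rw [map_sub]; ring
  rw [this]
  exact le_fA hx y

end Fwd
section Seg
variable {X : Type*} [NormedAddCommGroup X] [NormedSpace ℝ X]

lemma sum_range_id_cast (n : ℕ) : ∑ k ∈ Finset.range n, (k : ℝ) = n * (n - 1) / 2 := by
  induction n with
  | zero => simp
  | succ m ih => rw [Finset.sum_range_succ, ih]; push_cast; ring

/-- Integration of an affine subgradient family along a segment. -/
lemma seg_key {f : X → EReal} {x v : X} {u w : Dl X}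
    (hbot : ∀ z, f z ≠ ⊥) (hfin : f x ≠ ⊤)
    (hsub : ∀ t : ℝ, 0 ≤ t → t ≤ 1 → (u + t • w) ∈ subdiff f (x + t • v)) :
    f (x + v) = f x + ((u v + 2⁻¹ * w v : ℝ) : EReal) := by
  set α := u v with hα
  set β := w v with hβ
  set φ : ℝ → EReal := fun t => f (x + t • v) with hφ
  have hφ0 : φ 0 = f x := by simp [hφ]
  have hφ1 : φ 1 = f (x + v) := by simp [hφ]
  have hkey0 : ∀ s t : ℝ, 0 ≤ t → t ≤ 1 →
      (((s - t) * (α + t * β) : ℝ) : EReal) + φ t ≤ φ s := by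
    intro s t ht0 ht1
    have h := hsub t ht0 ht1 (x + s • v)
    have harg : x + s • v - (x + t • v) = (s - t) • v := by
      rw [sub_smul]; abel
    have happ : (u + t • w) (x + s • v - (x + t • v)) = (s - t) * (α + t * β) := by
      rw [harg]
      simp only [map_smul, ContinuousLinearMap.add_apply, ContinuousLinearMap.coe_smul',
        Pi.smul_apply, smul_eq_mul]
      try rw [← hα, ← hβ]
      try ring
    rwa [happ] at h
  have hne : ∀ t : ℝ, 0 ≤ t → t ≤ 1 → φ t ≠ ⊤ := by
    intro t ht0 ht1 htop
    have h := hkey0 0 t ht0 ht1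
    rw [htop, hφ0] at h
    have h2 : (((0 - t) * (α + t * β) : ℝ) : EReal) + ⊤ = ⊤ := by
      rw [EReal.add_top_iff_ne_bot]; exact EReal.coe_ne_bot _
    rw [h2, top_le_iff] at h
    exact hfin h
  set ψ : ℝ → ℝ := fun t => (φ t).toReal with hψ
  have hcoe : ∀ t : ℝ, 0 ≤ t → t ≤ 1 → φ t = ((ψ t : ℝ) : EReal) := fun t ht0 ht1 =>
    (EReal.coe_toReal (hne t ht0 ht1) (hbot _)).symm
  have hkey : ∀ s t : ℝ, 0 ≤ s → s ≤ 1 → 0 ≤ t → t ≤ 1 →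
      ψ t + (s - t) * (α + t * β) ≤ ψ s := by
    intro s t hs0 hs1 ht0 ht1
    have h := hkey0 s t ht0 ht1
    rw [hcoe s hs0 hs1, hcoe t ht0 ht1, ← EReal.coe_add, EReal.coe_le_coe_iff] at h
    linarith
  have hbound : ∀ n : ℕ, 0 < n → |ψ 1 - ψ 0 - (α + β / 2)| ≤ |β| / (2 * n) := by
    intro n hn
    have hnR : (0 : ℝ) < (n : ℝ) := by exact_mod_cast hn
    set g : ℕ → ℝ := fun k => ψ ((k : ℝ) / n) with hg
    have htel : ∑ k ∈ Finset.range n, (g (k + 1) - g k) = ψ 1 - ψ 0 := by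
      rw [Finset.sum_range_sub g n]
      have : ((n : ℝ) / n) = 1 := div_self hnR.ne'
      simp [hg, this]
    have hmem : ∀ k : ℕ, k ≤ n → 0 ≤ (k : ℝ) / n ∧ (k : ℝ) / n ≤ 1 := by
      intro k hk
      refine ⟨by positivity, ?_⟩
      rw [div_le_one hnR]; exact_mod_cast hk
    have hlow : ∀ k ∈ Finset.range n,
        α / n + (k : ℝ) * (β / n ^ 2) ≤ g (k + 1) - g k := by
      intro k hk
      have hk' : k < n := Finset.mem_range.mp hk
      obtain ⟨h0, h1⟩ := hmem k hk'.le
      obtain ⟨h0', h1'⟩ := hmem (k + 1) hk'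
      have h := hkey (((k : ℝ) + 1) / n) ((k : ℝ) / n) (by push_cast at h0'; exact_mod_cast h0')
        (by push_cast at h1'; exact_mod_cast h1') h0 h1
      have hdiff : ((k : ℝ) + 1) / n - (k : ℝ) / n = 1 / n := by
        field_simp; ring
      rw [hdiff] at h
      have hgk1 : g (k + 1) = ψ (((k : ℝ) + 1) / n) := by
        simp [hg]
      rw [hgk1]
      have hexp : 1 / (n : ℝ) * (α + (k : ℝ) / n * β) = α / n + (k : ℝ) * (β / n ^ 2) := by
        field_simp
      rw [hexp] at h
      linarith
    have hupp : ∀ k ∈ Finset.range n,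
        g (k + 1) - g k ≤ α / n + (k : ℝ) * (β / n ^ 2) + β / n ^ 2 := by
      intro k hk
      have hk' : k < n := Finset.mem_range.mp hk
      obtain ⟨h0, h1⟩ := hmem k hk'.le
      obtain ⟨h0', h1'⟩ := hmem (k + 1) hk'
      have h := hkey ((k : ℝ) / n) (((k : ℝ) + 1) / n) h0 h1
        (by push_cast at h0'; exact_mod_cast h0') (by push_cast at h1'; exact_mod_cast h1')
      have hdiff : (k : ℝ) / n - ((k : ℝ) + 1) / n = -(1 / n) := by
        field_simp; ring
      rw [hdiff] at h
      have hgk1 : g (k + 1) = ψ (((k : ℝ) + 1) / n) := by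
        simp [hg]
      rw [hgk1]
      have hexp : -(1 / (n : ℝ)) * (α + ((k : ℝ) + 1) / n * β)
          = -(α / n + (k : ℝ) * (β / n ^ 2) + β / n ^ 2) := by
        field_simp; ring
      rw [hexp] at h
      linarith
    have hsum : ∑ k ∈ Finset.range n, (α / n + (k : ℝ) * (β / n ^ 2))
        = α + β * ((n : ℝ) - 1) / (2 * n) := by
      rw [Finset.sum_add_distrib, Finset.sum_const, ← Finset.sum_mul, sum_range_id_cast]
      simp only [Finset.card_range, nsmul_eq_mul]
      field_simp
    have hsum2 : ∑ k ∈ Finset.range n, (α / n + (k : ℝ) * (β / n ^ 2) + β / n ^ 2)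
        = α + β * ((n : ℝ) - 1) / (2 * n) + β / n := by
      rw [Finset.sum_add_distrib, hsum, Finset.sum_const]
      simp only [Finset.card_range, nsmul_eq_mul]
      field_simp
    have hLb := Finset.sum_le_sum hlow
    have hUb := Finset.sum_le_sum hupp
    rw [htel, hsum] at hLb
    rw [htel, hsum2] at hUb
    have e1 : α + β * ((n : ℝ) - 1) / (2 * n) = α + β / 2 - β / (2 * n) := by
      field_simp; ring
    have e2 : α + β * ((n : ℝ) - 1) / (2 * n) + β / n = α + β / 2 + β / (2 * n) := by
      field_simp; ring
    rw [e1] at hLb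
    rw [e2] at hUb
    have hb1 : β / (2 * n) ≤ |β| / (2 * n) :=
      div_le_div_of_nonneg_right (le_abs_self β) (by positivity)
    have hb2 : -(|β| / (2 * n)) ≤ β / (2 * n) := by
      rw [← neg_div]
      exact div_le_div_of_nonneg_right (neg_abs_le β) (by positivity)
    rw [abs_le]
    constructor <;> linarith
  have hD : ψ 1 - ψ 0 = α + β / 2 := by
    by_contra hc
    set ε := |ψ 1 - ψ 0 - (α + β / 2)| with hε
    have hε0 : 0 < ε := abs_pos.mpr (sub_ne_zero.mpr hc)
    obtain ⟨n, hn⟩ := exists_nat_gt (|β| / (2 * ε))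
    have hn1 : 0 < n + 1 := Nat.succ_pos n
    have h := hbound (n + 1) hn1
    have hnR : (0 : ℝ) < ((n + 1 : ℕ) : ℝ) := by exact_mod_cast hn1
    have : |β| / (2 * ((n + 1 : ℕ) : ℝ)) < ε := by
      rw [div_lt_iff₀ (by positivity)]
      have hβn : |β| / (2 * ε) < ((n + 1 : ℕ) : ℝ) := by
        push_cast
        push_cast at hn
        linarith
      rw [div_lt_iff₀ (by positivity)] at hβn
      nlinarith
    linarith
  have h1 : f (x + v) = ((ψ 1 : ℝ) : EReal) := by rw [← hφ1]; exact hcoe 1 zero_le_one le_rfl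
  have h0 : f x = ((ψ 0 : ℝ) : EReal) := by rw [← hφ0]; exact hcoe 0 le_rfl zero_le_one
  rw [h1, h0, ← EReal.coe_add]
  norm_cast
  rw [show ψ 1 = ψ 0 + (α + β / 2) by linarith]
  ring

end Seg
section Sym
variable {X : Type*} [NormedAddCommGroup X] [NormedSpace ℝ X]

lemma sym_of_subdiff {A : X → Set (Dl X)} {f : X → EReal}
    (hlin : IsLinearRelation A) (hp : ProperFun f)
    (hA : ∀ x, A x = subdiff f x) : SymOp A := by
  obtain ⟨hbot, y₀, hy₀⟩ := hp
  obtain ⟨h00, hadd, hsmul⟩ := hlin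
  rintro ⟨x, xs⟩ hxg
  have hx : xs ∈ A x := hxg
  intro z zs hz
  -- compute f along rays through the origin
  have hray : ∀ (a : X) (as : Dl X), as ∈ A a → f a = f 0 + ((2⁻¹ * as a : ℝ) : EReal) := by
    intro a as ha
    have hfin0 : f 0 ≠ ⊤ := by
      have h0' : (0 : Dl X) ∈ subdiff f 0 := by rw [← hA]; exact h00
      exact Aux.subdiff_ne_top h0' hy₀
    have hsub : ∀ t : ℝ, 0 ≤ t → t ≤ 1 →
        ((0 : Dl X) + t • as) ∈ subdiff f ((0 : X) + t • a) := by
      intro t _ _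
      rw [zero_add, zero_add, ← hA]
      exact hsmul t a as ha
    have := seg_key hbot hfin0 hsub
    rw [zero_add] at this
    simpa using this
  -- compute f along the segment from x to z
  have hseg : f z = f x + ((xs (z - x) + 2⁻¹ * (zs - xs) (z - x) : ℝ) : EReal) := by
    have hfinx : f x ≠ ⊤ := by
      have : xs ∈ subdiff f x := by rw [← hA]; exact hx
      exact Aux.subdiff_ne_top this hy₀
    have hsub : ∀ t : ℝ, 0 ≤ t → t ≤ 1 →
        (xs + t • (zs - xs)) ∈ subdiff f (x + t • (z - x)) := by
      intro t _ _
      rw [← hA]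
      have h1 : (1 - t) • xs + t • zs ∈ A ((1 - t) • x + t • z) :=
        hadd _ _ _ _ (hsmul (1 - t) x xs hx) (hsmul t z zs hz)
      have e1 : (1 - t) • x + t • z = x + t • (z - x) := by
        rw [sub_smul, smul_sub, one_smul]; abel
      have e2 : (1 - t) • xs + t • zs = xs + t • (zs - xs) := by
        module
      rwa [e1, e2] at h1
    have := seg_key hbot hfinx hsub
    rwa [add_sub_cancel] at this
  -- convert to real identities
  have hfinx : f x ≠ ⊤ := by
    have : xs ∈ subdiff f x := by rw [← hA]; exact hx
    exact Aux.subdiff_ne_top this hy₀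
  have hfinz : f z ≠ ⊤ := by
    have : zs ∈ subdiff f z := by rw [← hA]; exact hz
    exact Aux.subdiff_ne_top this hy₀
  have hfin0 : f 0 ≠ ⊤ := by
    have h0' : (0 : Dl X) ∈ subdiff f 0 := by rw [← hA]; exact h00
    exact Aux.subdiff_ne_top h0' hy₀
  obtain ⟨r0, hr0⟩ : ∃ r : ℝ, f 0 = (r : EReal) := ⟨_, (EReal.coe_toReal hfin0 (hbot 0)).symm⟩
  obtain ⟨rx, hrx⟩ : ∃ r : ℝ, f x = (r : EReal) := ⟨_, (EReal.coe_toReal hfinx (hbot x)).symm⟩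
  obtain ⟨rz, hrz⟩ : ∃ r : ℝ, f z = (r : EReal) := ⟨_, (EReal.coe_toReal hfinz (hbot z)).symm⟩
  have e1 : rx = r0 + 2⁻¹ * xs x := by
    have := hray x xs hx
    rw [hrx, hr0, ← EReal.coe_add] at this
    exact_mod_cast this
  have e2 : rz = r0 + 2⁻¹ * zs z := by
    have := hray z zs hz
    rw [hrz, hr0, ← EReal.coe_add] at this
    exact_mod_cast this
  have e3 : rz = rx + (xs (z - x) + 2⁻¹ * (zs - xs) (z - x)) := by
    rw [hrz, hrx, ← EReal.coe_add] at hseg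
    exact_mod_cast hseg
  have ex1 : xs (z - x) = xs z - xs x := by rw [map_sub]
  have ex2 : (zs - xs) (z - x) = zs z - zs x - xs z + xs x := by
    simp [map_sub]; ring
  show xs z = zs x
  rw [ex1, ex2] at e3
  linarith

end Sym
section Ekeland
variable {X : Type*} [NormedAddCommGroup X] [NormedSpace ℝ X]

set_option maxHeartbeats 1000000 in
/-- Weak form of Ekeland's variational principle, for `EReal`-valued functions. -/
lemma ekeland_weak [CompleteSpace X] {φ : X → EReal} (hlsc : LowerSemicontinuous φ)
    {b : ℝ} (hb : ∀ z, (b : EReal) ≤ φ z) {u₀ : X} (h₀ : φ u₀ ≠ ⊤)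
    {η : ℝ} (hη : 0 < η) :
    ∃ v : X, φ v ≠ ⊤ ∧ ∀ z : X, φ v ≤ φ z + ((η * ‖z - v‖ : ℝ) : EReal) := by
  classical
  set P : X → X → Prop := fun a z => φ z + ((η * ‖z - a‖ : ℝ) : EReal) ≤ φ a with hP
  have hPrefl : ∀ a, P a a := by intro a; simp [hP]
  have hPle : ∀ a z, P a z → φ z ≤ φ a := by
    intro a z h
    refine le_trans ?_ h
    refine le_add_of_nonneg_right ?_
    exact_mod_cast mul_nonneg hη.le (norm_nonneg _)
  have hsel : ∀ (n : ℕ) (a : X), ∃ z, φ a ≠ ⊤ →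
      P a z ∧ ∀ w, P a w → φ z ≤ φ w + (((2 : ℝ)⁻¹ ^ n : ℝ) : EReal) := by
    intro n a
    by_cases ha : φ a = ⊤
    · exact ⟨a, fun h => absurd ha h⟩
    set I : EReal := ⨅ z ∈ {z | P a z}, φ z with hI
    have hIb : (b : EReal) ≤ I := le_iInf₂ fun z _ => hb z
    have hIa : I ≤ φ a := iInf₂_le a (hPrefl a)
    have hIt : I ≠ ⊤ := fun h => ha (top_le_iff.mp (h ▸ hIa))
    have hIbot : I ≠ ⊥ := fun h => by simp [h] at hIb
    obtain ⟨rI, hrI⟩ : ∃ r : ℝ, I = (r : EReal) := ⟨_, (EReal.coe_toReal hIt hIbot).symm⟩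
    have hcpos : (0 : ℝ) < (2 : ℝ)⁻¹ ^ n := by positivity
    have hlt : (⨅ z ∈ {z | P a z}, φ z) < I + (((2 : ℝ)⁻¹ ^ n : ℝ) : EReal) := by
      rw [← hI, hrI, ← EReal.coe_add, EReal.coe_lt_coe_iff]
      linarith
    rw [iInf_lt_iff] at hlt
    obtain ⟨z, hz⟩ := hlt
    rw [iInf_lt_iff] at hz
    obtain ⟨hzP, hzlt⟩ := hz
    refine ⟨z, fun _ => ⟨hzP, fun w hw => ?_⟩⟩
    have hIw : I ≤ φ w := iInf₂_le w hw
    exact le_trans hzlt.le (add_le_add_left hIw _)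
  set u : ℕ → X := fun n => Nat.rec u₀ (fun n a => (hsel n a).choose) n with hu
  have husucc : ∀ n, u (n + 1) = (hsel n (u n)).choose := fun n => rfl
  have htop : ∀ n, φ (u n) ≠ ⊤ := by
    intro n
    induction n with
    | zero => exact h₀
    | succ m ih =>
      have hch := (hsel m (u m)).choose_spec ih
      rw [husucc]
      intro h
      have := hPle _ _ hch.1
      rw [h] at this
      exact ih (top_le_iff.mp this)
  have hstep : ∀ n, P (u n) (u (n + 1)) ∧
      ∀ w, P (u n) w → φ (u (n + 1)) ≤ φ w + (((2 : ℝ)⁻¹ ^ n : ℝ) : EReal) := by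
    intro n
    rw [husucc]
    exact (hsel n (u n)).choose_spec (htop n)
  set r : ℕ → ℝ := fun n => (φ (u n)).toReal with hr
  have hbot' : ∀ n, φ (u n) ≠ ⊥ := fun n h => by simpa [h] using hb (u n)
  have hcoe : ∀ n, φ (u n) = ((r n : ℝ) : EReal) := fun n =>
    (EReal.coe_toReal (htop n) (hbot' n)).symm
  have hbr : ∀ n, b ≤ r n := by
    intro n; have := hb (u n); rw [hcoe n] at this; exact_mod_cast this
  have hrstep : ∀ n, r (n + 1) + η * ‖u (n + 1) - u n‖ ≤ r n := by
    intro n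
    have h := (hstep n).1
    rw [hP] at h
    rw [hcoe n, hcoe (n + 1), ← EReal.coe_add, EReal.coe_le_coe_iff] at h
    exact h
  have hranti : ∀ n, r (n + 1) ≤ r n := by
    intro n
    have := hrstep n
    nlinarith [norm_nonneg (u (n + 1) - u n), hη]
  have hranti' : Antitone r := antitone_nat_of_succ_le hranti
  have hdist : ∀ n, η * dist (u n) (u (n + 1)) ≤ r n - r (n + 1) := by
    intro n
    rw [dist_comm, dist_eq_norm]
    have := hrstep n
    linarith
  have hsum : ∀ n, ∑ k ∈ Finset.range n, dist (u k) (u (k + 1)) ≤ (r 0 - b) / η := by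
    intro n
    rw [le_div_iff₀ hη]
    calc (∑ k ∈ Finset.range n, dist (u k) (u (k + 1))) * η
        = ∑ k ∈ Finset.range n, η * dist (u k) (u (k + 1)) := by
          rw [Finset.sum_mul]; exact Finset.sum_congr rfl fun k _ => mul_comm _ _
      _ ≤ ∑ k ∈ Finset.range n, (r k - r (k + 1)) :=
          Finset.sum_le_sum fun k _ => hdist k
      _ = r 0 - r n := by rw [← Finset.sum_range_sub' (fun k => r k) n]
      _ ≤ r 0 - b := by linarith [hbr n]
  have hsummable : Summable fun n => dist (u n) (u (n + 1)) :=
    summable_of_sum_range_le (fun n => dist_nonneg) hsum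
  have hcauchy : CauchySeq u := cauchySeq_of_summable_dist hsummable
  obtain ⟨v, hv⟩ := cauchySeq_tendsto_of_complete hcauchy
  have hbdd : BddBelow (Set.range r) := ⟨b, by rintro _ ⟨n, rfl⟩; exact hbr n⟩
  set L : ℝ := ⨅ n, r n with hL
  have hrL : Filter.Tendsto r Filter.atTop (nhds L) :=
    tendsto_atTop_ciInf hranti' hbdd
  have hLr : ∀ n, L ≤ r n := fun n => ciInf_le hbdd n
  have hdist2 : ∀ n m, n ≤ m → η * dist (u n) (u m) ≤ r n - r m := by
    intro n m hnm
    induction m with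
    | zero =>
      have : n = 0 := Nat.le_zero.mp hnm
      simp [this]
    | succ k ih =>
      rcases Nat.lt_or_ge n (k + 1) with h | h
      · have hnk : n ≤ k := Nat.lt_succ_iff.mp h
        have h1 := ih hnk
        have h2 : dist (u n) (u (k + 1)) ≤ dist (u n) (u k) + dist (u k) (u (k + 1)) :=
          dist_triangle _ _ _
        have h2' := mul_le_mul_of_nonneg_left h2 hη.le
        rw [mul_add] at h2'
        have h4 := hdist k
        linarith
      · have : n = k + 1 := le_antisymm hnm h
        simp [this]
  have hvd : ∀ n, η * ‖v - u n‖ ≤ r n - L := by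
    intro n
    have h1 : Filter.Tendsto (fun m => η * dist (u n) (u m)) Filter.atTop
        (nhds (η * dist (u n) v)) := (tendsto_const_nhds.dist hv).const_mul η
    have h2 : Filter.Tendsto (fun m => r n - r m) Filter.atTop (nhds (r n - L)) :=
      tendsto_const_nhds.sub hrL
    have h3 : η * dist (u n) v ≤ r n - L := by
      refine le_of_tendsto_of_tendsto h1 h2 ?_
      filter_upwards [Filter.eventually_ge_atTop n] with m hm
      exact hdist2 n m hm
    rwa [dist_comm, dist_eq_norm] at h3
  have hφvbot : φ v ≠ ⊥ := fun h => by simpa [h] using hb v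
  have hφvL : φ v ≤ ((L : ℝ) : EReal) := by
    by_contra hc
    push_neg at hc
    obtain ⟨y, hy1, hy2⟩ := EReal.exists_between_coe_real hc
    have hev1 : ∀ᶠ n in Filter.atTop, (y : EReal) < φ (u n) :=
      hv.eventually (hlsc v _ hy2)
    have hLy : L < y := by exact_mod_cast hy1
    have hev2 : ∀ᶠ n in Filter.atTop, r n < y := (tendsto_order.1 hrL).2 y hLy
    obtain ⟨n, hn1, hn2⟩ := (hev1.and hev2).exists
    rw [hcoe n, EReal.coe_lt_coe_iff] at hn1
    linarith
  have hvt : φ v ≠ ⊤ := by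
    intro h
    rw [h, top_le_iff] at hφvL
    exact EReal.coe_ne_top L hφvL
  refine ⟨v, hvt, ?_⟩
  intro z
  by_contra hcz
  push_neg at hcz
  -- z strictly improves v ; show it improves every uₙ
  have hzt : φ z ≠ ⊤ := by
    intro h
    rw [h, EReal.top_add_of_ne_bot (EReal.coe_ne_bot _)] at hcz
    exact not_top_lt hcz
  have hzbot : φ z ≠ ⊥ := fun h => by simpa [h] using hb z
  obtain ⟨s, hs⟩ : ∃ s : ℝ, φ z = (s : EReal) := ⟨_, (EReal.coe_toReal hzt hzbot).symm⟩
  obtain ⟨pv, hpv⟩ : ∃ p : ℝ, φ v = (p : EReal) := ⟨_, (EReal.coe_toReal hvt hφvbot).symm⟩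
  have hsL : s + η * ‖z - v‖ < pv := by
    rw [hs, hpv, ← EReal.coe_add, EReal.coe_lt_coe_iff] at hcz
    exact hcz
  have hpvL : pv ≤ L := by
    rw [hpv, EReal.coe_le_coe_iff] at hφvL
    exact hφvL
  have hPz : ∀ n, P (u n) z := by
    intro n
    rw [hP]
    simp only
    rw [hs, hcoe n, ← EReal.coe_add, EReal.coe_le_coe_iff]
    have htri : ‖z - u n‖ ≤ ‖z - v‖ + ‖v - u n‖ := by
      have := norm_sub_le_norm_sub_add_norm_sub z v (u n)
      linarith
    have h5 := hvd n
    nlinarith [hη]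
  have hlim : ∀ n, r (n + 1) ≤ s + (2 : ℝ)⁻¹ ^ n := by
    intro n
    have := (hstep n).2 z (hPz n)
    rw [hs, hcoe (n + 1), ← EReal.coe_add, EReal.coe_le_coe_iff] at this
    exact this
  have hLs : L ≤ s := by
    have h1 : Filter.Tendsto (fun n => r (n + 1)) Filter.atTop (nhds L) :=
      hrL.comp (Filter.tendsto_add_atTop_nat 1)
    have h2 : Filter.Tendsto (fun n : ℕ => s + (2 : ℝ)⁻¹ ^ n) Filter.atTop (nhds (s + 0)) := by
      refine tendsto_const_nhds.add ?_
      exact tendsto_pow_atTop_nhds_zero_of_lt_one (by norm_num) (by norm_num)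
    rw [add_zero] at h2
    exact le_of_tendsto_of_tendsto' h1 h2 hlim
  nlinarith [hvd 0, norm_nonneg (z - v), hη]

end Ekeland
section SumRule
variable {X : Type*} [NormedAddCommGroup X] [NormedSpace ℝ X]

lemma coe_shift {A B : EReal} {t : ℝ} (h : A + (t : EReal) ≤ B) :
    A ≤ B + ((-t : ℝ) : EReal) := by
  have h2 := add_le_add_left h ((-t : ℝ) : EReal)
  rwa [add_assoc, ← EReal.coe_add, add_neg_cancel, EReal.coe_zero, add_zero] at h2

lemma coe_shift' {A B : EReal} {t : ℝ} (h : A ≤ B + (t : EReal)) :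
    A + ((-t : ℝ) : EReal) ≤ B := by
  have h2 := add_le_add_left h ((-t : ℝ) : EReal)
  rwa [add_assoc, ← EReal.coe_add, add_neg_cancel, EReal.coe_zero, add_zero] at h2

set_option maxHeartbeats 1000000 in
/-- Sum rule / sandwich: if `v` minimizes `F + h` with `h` real-valued convex continuous and
`F v` finite, there is a separating functional. -/
lemma sumrule {F : X → EReal} (hFconv : ConvexFun F) {h : X → ℝ}
    (hhconv : ConvexOn ℝ Set.univ h) (hhcont : Continuous h) {v : X}
    (hFvt : F v ≠ ⊤) (hFvb : F v ≠ ⊥)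
    (hmin : ∀ z, F v + ((h v : ℝ) : EReal) ≤ F z + ((h z : ℝ) : EReal)) :
    ∃ p : Dl X, (∀ z, p (z - v) ≤ h z - h v) ∧
      (∀ z, F v ≤ F z + ((p (z - v) : ℝ) : EReal)) := by
  classical
  obtain ⟨c, hc⟩ : ∃ r : ℝ, F v = (r : EReal) := ⟨_, (EReal.coe_toReal hFvt hFvb).symm⟩
  have hFzb : ∀ z, F z ≠ ⊥ := by
    intro z hz
    have := hmin z
    rw [hz, hc] at this
    simp only [EReal.bot_add, le_bot_iff] at this
    exact EReal.coe_ne_bot _ (by rw [← EReal.coe_add] at this; exact this)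
  set U : Set (X × ℝ) := {q | h (v + q.1) - h v < q.2} with hU
  set V : Set (X × ℝ) := {q | F (v + q.1) + ((q.2 : ℝ) : EReal) ≤ F v} with hV
  have hUopen : IsOpen U := by
    apply isOpen_lt
    · exact (hhcont.comp (continuous_const.add continuous_fst)).sub continuous_const
    · exact continuous_snd
  have hUconv : Convex ℝ U := by
    rw [convex_iff_forall_pos]
    rintro ⟨w₁, t₁⟩ hq₁ ⟨w₂, t₂⟩ hq₂ a b ha hb hab
    simp only [hU, Set.mem_setOf_eq, Prod.smul_mk, Prod.mk_add_mk, smul_eq_mul] at *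
    have hcomb : v + (a • w₁ + b • w₂) = a • (v + w₁) + b • (v + w₂) := by
      rw [smul_add, smul_add, add_add_add_comm, ← add_smul, hab, one_smul]
    rw [hcomb]
    have := hhconv.2 (Set.mem_univ (v + w₁)) (Set.mem_univ (v + w₂)) ha.le hb.le hab
    have hv1 : a * (h (v + w₁) - h v) < a * t₁ := by exact (mul_lt_mul_iff_right₀ ha).mpr hq₁
    have hv2 : b * (h (v + w₂) - h v) < b * t₂ := by exact (mul_lt_mul_iff_right₀ hb).mpr hq₂
    have h1 : a * h v + b * h v = h v := by rw [← add_mul, hab, one_mul]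
    simp only [smul_eq_mul] at this
    linarith
  have hVconv : Convex ℝ V := by
    rw [convex_iff_forall_pos]
    rintro ⟨w₁, t₁⟩ hq₁ ⟨w₂, t₂⟩ hq₂ a b ha hb hab
    simp only [hV, Set.mem_setOf_eq, Prod.smul_mk, Prod.mk_add_mk, smul_eq_mul] at *
    have hcomb : v + (a • w₁ + b • w₂) = a • (v + w₁) + b • (v + w₂) := by
      rw [smul_add, smul_add, add_add_add_comm, ← add_smul, hab, one_smul]
    rw [hcomb, hc]
    have h1 : F (v + w₁) ≤ ((c - t₁ : ℝ) : EReal) := by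
      have h' := coe_shift hq₁
      rw [hc, ← EReal.coe_add] at h'
      rwa [sub_eq_add_neg]
    have h2 : F (v + w₂) ≤ ((c - t₂ : ℝ) : EReal) := by
      have h' := coe_shift hq₂
      rw [hc, ← EReal.coe_add] at h'
      rwa [sub_eq_add_neg]
    have hcvx := hFconv (v + w₁) (v + w₂) a b ha.le hb.le hab
    have hmul1 : (a : EReal) * F (v + w₁) ≤ ((a * (c - t₁) : ℝ) : EReal) := by
      rw [EReal.coe_mul]
      exact mul_le_mul_of_nonneg_left h1 (by exact_mod_cast ha.le)
    have hmul2 : (b : EReal) * F (v + w₂) ≤ ((b * (c - t₂) : ℝ) : EReal) := by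
      rw [EReal.coe_mul]
      exact mul_le_mul_of_nonneg_left h2 (by exact_mod_cast hb.le)
    have hsum : F (a • (v + w₁) + b • (v + w₂)) ≤ ((a * (c - t₁) + b * (c - t₂) : ℝ) : EReal) := by
      refine hcvx.trans ?_
      rw [EReal.coe_add]
      exact add_le_add hmul1 hmul2
    have := add_le_add_left hsum (((a * t₁ + b * t₂ : ℝ)) : EReal)
    rw [← EReal.coe_add] at this
    have heq : a * (c - t₁) + b * (c - t₂) + (a * t₁ + b * t₂) = c := by
      have : a * c + b * c = c := by rw [← add_mul, hab, one_mul]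
      ring_nf
      ring_nf at this
      linarith
    rwa [heq] at this
  have hdisj : Disjoint U V := by
    rw [Set.disjoint_left]
    rintro ⟨w, t⟩ hqU hqV
    simp only [hU, hV, Set.mem_setOf_eq] at hqU hqV
    have hb' : F (v + w) ≠ ⊥ := hFzb _
    have ht' : F (v + w) ≠ ⊤ := by
      intro htop
      rw [htop] at hqV
      rw [EReal.top_add_of_ne_bot (EReal.coe_ne_bot _), top_le_iff] at hqV
      exact hFvt hqV
    obtain ⟨ρ, hρ⟩ : ∃ r : ℝ, F (v + w) = (r : EReal) := ⟨_, (EReal.coe_toReal ht' hb').symm⟩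
    have h1 : ρ + t ≤ c := by
      rw [hρ, hc, ← EReal.coe_add, EReal.coe_le_coe_iff] at hqV
      exact hqV
    have h2 := hmin (v + w)
    rw [hρ, hc, ← EReal.coe_add, ← EReal.coe_add, EReal.coe_le_coe_iff] at h2
    linarith
  obtain ⟨Φ, s, hΦU, hΦV⟩ := geometric_hahn_banach_open hUconv hUopen hVconv hdisj
  set ψ : Dl X := Φ.comp (ContinuousLinearMap.inl ℝ X ℝ) with hψ
  set β : ℝ := Φ (0, 1) with hβdef
  have hsplit : ∀ (w : X) (t : ℝ), Φ (w, t) = ψ w + t * β := by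
    intro w t
    have : (w, t) = (w, (0 : ℝ)) + t • ((0 : X), (1 : ℝ)) := by
      simp [Prod.ext_iff]
    rw [this, map_add, map_smul]
    simp [hψ, hβdef, ContinuousLinearMap.inl_apply, smul_eq_mul]
  have hV00 : ((0 : X), (0 : ℝ)) ∈ V := by
    show F (v + 0) + ((0 : ℝ) : EReal) ≤ F v
    rw [add_zero, EReal.coe_zero, add_zero]
  have hs0 : s ≤ 0 := by
    have h' := hΦV _ hV00
    rw [show ((0:X),(0:ℝ)) = (0 : X × ℝ) from rfl, map_zero] at h'
    exact h'
  have hUmem : ∀ t : ℝ, 0 < t → ((0 : X), t) ∈ U := by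
    intro t ht
    simp only [hU, Set.mem_setOf_eq, add_zero, sub_self]
    exact ht
  have hβ : β < 0 := by
    have h' := hΦU _ (hUmem 1 one_pos)
    rw [hsplit 0 1, map_zero, one_mul, zero_add] at h'
    linarith
  have hnb : (0 : ℝ) < -β := neg_pos.mpr hβ
  have hs0' : 0 ≤ s := by
    by_contra hcs
    push_neg at hcs
    have hpos : 0 < s / (2 * β) := div_pos_of_neg_of_neg hcs (by linarith)
    have h' := hΦU _ (hUmem _ hpos)
    rw [hsplit, map_zero, zero_add] at h'
    have hx : s / (2 * β) * β = s / 2 := by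
      rw [div_mul_eq_mul_div, mul_div_mul_right _ _ hβ.ne]
    rw [hx] at h'
    linarith
  have hseq : s = 0 := le_antisymm hs0 hs0'
  have key1 : ∀ w : X, ψ w + (h (v + w) - h v) * β ≤ 0 := by
    intro w
    by_contra hk
    push_neg at hk
    set ε : ℝ := ψ w + (h (v + w) - h v) * β with hε
    have hδ : 0 < ε / (2 * (-β)) := div_pos hk (by linarith)
    have hmem : (w, h (v + w) - h v + ε / (2 * (-β))) ∈ U := by
      simp only [hU, Set.mem_setOf_eq]
      linarith
    have h' := hΦU _ hmem
    rw [hsplit, hseq] at h'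
    have hx : ε / (2 * (-β)) * (-β) = ε / 2 := by
      rw [div_mul_eq_mul_div, mul_div_mul_right _ _ hnb.ne']
    have hexp : ε / (2 * (-β)) * β = -(ε / 2) := by
      rw [← hx]; ring
    nlinarith [hexp]
  have key2 : ∀ (w : X) (ρ : ℝ), F (v + w) = (ρ : EReal) → 0 ≤ ψ w + (c - ρ) * β := by
    intro w ρ hρ
    have hmem : (w, c - ρ) ∈ V := by
      show F (v + w) + ((c - ρ : ℝ) : EReal) ≤ F v
      rw [hρ, hc, ← EReal.coe_add]
      exact_mod_cast le_of_eq (by ring)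
    have h' := hΦV _ hmem
    rw [hsplit, hseq] at h'
    exact h'
  refine ⟨(-β)⁻¹ • ψ, ?_, ?_⟩
  · intro z
    have hk := key1 (z - v)
    rw [add_sub_cancel] at hk
    have happ : ((-β)⁻¹ • ψ) (z - v) = ψ (z - v) * (-β)⁻¹ := by
      rw [ContinuousLinearMap.smul_apply, smul_eq_mul, mul_comm]
    rw [happ, ← div_eq_mul_inv, div_le_iff₀ hnb]
    nlinarith [hk]
  · intro z
    rcases eq_or_ne (F z) ⊤ with hz | hz
    · rw [hz, EReal.top_add_of_ne_bot (EReal.coe_ne_bot _)]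
      exact le_top
    obtain ⟨ρ, hρ⟩ : ∃ r : ℝ, F z = (r : EReal) := ⟨_, (EReal.coe_toReal hz (hFzb z)).symm⟩
    have hk := key2 (z - v) ρ (by rwa [add_sub_cancel])
    rw [hc, hρ, ← EReal.coe_add, EReal.coe_le_coe_iff]
    have happ : ((-β)⁻¹ • ψ) (z - v) = ψ (z - v) * (-β)⁻¹ := by
      rw [ContinuousLinearMap.smul_apply, smul_eq_mul, mul_comm]
    rw [happ]
    rw [← sub_le_iff_le_add']
    rw [← div_eq_mul_inv, le_div_iff₀ hnb]
    nlinarith [hk]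

end SumRule
section MaxMono
variable {X : Type*} [NormedAddCommGroup X] [NormedSpace ℝ X]

lemma helper1 {a b : ℝ} {P Q : EReal} (h : ((a : ℝ) : EReal) + P ≤ ((b : ℝ) : EReal) + Q) :
    ((a - b : ℝ) : EReal) + P ≤ Q := by
  have h2 := add_le_add_right h (((-b : ℝ)) : EReal)
  rw [← add_assoc, ← add_assoc, ← EReal.coe_add, ← EReal.coe_add] at h2
  rw [neg_add_cancel, EReal.coe_zero, zero_add, add_comm (-b) a, ← sub_eq_add_neg] at h2
  exact h2

lemma helper2 (a b : ℝ) (Q : EReal) : (((a : ℝ) : EReal) + Q) + ((b : ℝ) : EReal)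
    = ((a + b : ℝ) : EReal) + Q := by
  rw [add_comm (((a : ℝ) : EReal) + Q) _, ← add_assoc, ← EReal.coe_add, add_comm b a]

lemma convexOn_sqnorm (ε : ℝ) (hε : 0 ≤ ε) :
    ConvexOn ℝ Set.univ (fun z : X => ε / 2 * ‖z‖ ^ 2) := by
  refine ⟨convex_univ, fun x _ y _ a b ha hb hab => ?_⟩
  simp only [smul_eq_mul]
  have h1 : ‖a • x + b • y‖ ≤ a * ‖x‖ + b * ‖y‖ := by
    refine (norm_add_le _ _).trans ?_
    rw [norm_smul, norm_smul, Real.norm_eq_abs, Real.norm_eq_abs,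
      abs_of_nonneg ha, abs_of_nonneg hb]
  have h2 : (a * ‖x‖ + b * ‖y‖) ^ 2 ≤ a * ‖x‖ ^ 2 + b * ‖y‖ ^ 2 := by
    nlinarith [mul_nonneg (mul_nonneg ha hb) (sq_nonneg (‖x‖ - ‖y‖)), sq_nonneg (‖x‖ - ‖y‖)]
  have h3 : ‖a • x + b • y‖ ^ 2 ≤ (a * ‖x‖ + b * ‖y‖) ^ 2 := by
    have := norm_nonneg (a • x + b • y)
    nlinarith [h1]
  nlinarith [h3, h2, hε]

lemma convexOn_normsub (η : ℝ) (hη : 0 ≤ η) (v : X) :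
    ConvexOn ℝ Set.univ (fun z : X => η * ‖z - v‖) := by
  refine ⟨convex_univ, fun x _ y _ a b ha hb hab => ?_⟩
  simp only [smul_eq_mul]
  have hcomb : a • x + b • y - v = a • (x - v) + b • (y - v) := by
    have hv : a • v + b • v = v := by rw [← add_smul, hab, one_smul]
    nth_rewrite 1 [← hv]
    rw [smul_sub, smul_sub]
    abel
  rw [hcomb]
  have h1 : ‖a • (x - v) + b • (y - v)‖ ≤ a * ‖x - v‖ + b * ‖y - v‖ := by
    refine (norm_add_le _ _).trans ?_
    rw [norm_smul, norm_smul, Real.norm_eq_abs, Real.norm_eq_abs,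
      abs_of_nonneg ha, abs_of_nonneg hb]
  nlinarith [h1, hη]

lemma coe_mul_coe_add {a r : ℝ} (ha : 0 ≤ a) {E : EReal} (hE : E ≠ ⊥) :
    (a : EReal) * (((r : ℝ) : EReal) + E) = ((a * r : ℝ) : EReal) + (a : EReal) * E := by
  rcases eq_or_ne E ⊤ with hT | hT
  · subst hT
    rcases eq_or_lt_of_le ha with h0 | h0
    · simp [← h0]
    · rw [EReal.coe_add_top, EReal.coe_mul_top_of_pos h0, EReal.coe_add_top]
  · obtain ⟨ρ, hρ⟩ : ∃ q : ℝ, E = (q : EReal) := ⟨_, (EReal.coe_toReal hT hE).symm⟩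
    subst hρ
    norm_cast
    ring

set_option maxHeartbeats 2000000 in
/-- Rockafellar-type maximality: any point monotonically related to the graph of a
subdifferential belongs to it. -/
lemma mem_subdiff_of_related [CompleteSpace X] {f : X → EReal} (hbot : ∀ z, f z ≠ ⊥)
    {y₀ : X} (hy₀ : f y₀ ≠ ⊤) (hlsc : LowerSemicontinuous f) (hconv : ConvexFun f)
    (h00 : (0 : Dl X) ∈ subdiff f 0) {x : X} {xs : Dl X}
    (hrel : ∀ y ys, ys ∈ subdiff f y → 0 ≤ (xs - ys) (x - y)) : xs ∈ subdiff f x := by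
  classical
  have hf0t : f 0 ≠ ⊤ := Aux.subdiff_ne_top h00 hy₀
  obtain ⟨c0, hc0⟩ : ∃ r : ℝ, f 0 = (r : EReal) := ⟨_, (EReal.coe_toReal hf0t (hbot 0)).symm⟩
  have hlow : ∀ y, ((c0 : ℝ) : EReal) ≤ f y := by
    intro y
    have := h00 y
    rw [hc0] at this
    simpa using this
  set F : X → EReal := fun z => ((-(xs z) : ℝ) : EReal) + f (x + z) with hF
  have hFbot : ∀ z, F z ≠ ⊥ := by
    intro z h
    rw [hF] at h
    simp only at h
    rw [EReal.add_eq_bot_iff] at h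
    rcases h with h | h
    · exact EReal.coe_ne_bot _ h
    · exact hbot _ h
  have hFlsc : LowerSemicontinuous F := by
    have h1 : LowerSemicontinuous (fun z : X => f (x + z)) := by
      intro z₀ y hy
      have := hlsc (x + z₀) y hy
      exact ((continuous_const.add continuous_id).tendsto z₀).eventually this
    have h2 : Continuous (fun z : X => ((-(xs z) : ℝ) : EReal)) :=
      continuous_coe_real_ereal.comp (xs.continuous.neg)
    exact LowerSemicontinuous.add' h2.lowerSemicontinuous h1
      (fun z => EReal.continuousAt_add (.inl (EReal.coe_ne_top _)) (.inl (EReal.coe_ne_bot _)))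
  have hFconv : ConvexFun F := by
    intro z₁ z₂ a b ha hb hab
    rw [hF]
    simp only
    have hcomb : x + (a • z₁ + b • z₂) = a • (x + z₁) + b • (x + z₂) := by
      rw [smul_add, smul_add, add_add_add_comm, ← add_smul, hab, one_smul]
    have hlin : -(xs (a • z₁ + b • z₂)) = a * (-(xs z₁)) + b * (-(xs z₂)) := by
      rw [map_add, map_smul, map_smul]; simp only [smul_eq_mul]; ring
    rw [hcomb, hlin]
    have hcvx := hconv (x + z₁) (x + z₂) a b ha hb hab
    calc ((a * (-(xs z₁)) + b * (-(xs z₂)) : ℝ) : EReal) + f (a • (x + z₁) + b • (x + z₂))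
        ≤ ((a * (-(xs z₁)) + b * (-(xs z₂)) : ℝ) : EReal)
          + ((a : EReal) * f (x + z₁) + (b : EReal) * f (x + z₂)) := add_le_add_right hcvx _
      _ = (a : EReal) * (((-(xs z₁) : ℝ) : EReal) + f (x + z₁))
          + (b : EReal) * (((-(xs z₂) : ℝ) : EReal) + f (x + z₂)) := by
          rw [coe_mul_coe_add ha (hbot _), coe_mul_coe_add hb (hbot _), EReal.coe_add]
          rw [add_add_add_comm]
  -- the global lower bound
  have hFge : ∀ z, ((c0 - ‖xs‖ * ‖z‖ : ℝ) : EReal) ≤ F z := by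
    intro z
    rw [hF]
    simp only
    have h1 : -(xs z) ≥ -(‖xs‖ * ‖z‖) := by
      have := xs.le_opNorm z
      have h2 : xs z ≤ |xs z| := le_abs_self _
      have h3 : |xs z| = ‖xs z‖ := rfl
      nlinarith [abs_nonneg (xs z)]
    calc ((c0 - ‖xs‖ * ‖z‖ : ℝ) : EReal) = ((-(‖xs‖ * ‖z‖) : ℝ) : EReal) + ((c0 : ℝ) : EReal) := by
          rw [← EReal.coe_add]; norm_cast; ring
      _ ≤ ((-(xs z) : ℝ) : EReal) + f (x + z) := by
          exact add_le_add (by exact_mod_cast h1) (hlow _)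
  -- the key claim, via Ekeland + the sum rule
  have claim2 : ∀ m : ℝ, ((m : ℝ) : EReal) < F 0 → ∀ ε : ℝ, 0 < ε → ∀ δ : ℝ, 0 < δ →
      (∀ z : X, ‖z‖ < δ → ((m : ℝ) : EReal) < F z) → ∀ η : ℝ, 0 < η → 4 * η < ε * δ →
      ∀ z : X, ((m : ℝ) : EReal) ≤ F z + ((ε / 2 * ‖z‖ ^ 2 + η * (‖z‖ + δ) : ℝ) : EReal) := by
    intro m hm ε hε δ hδ hball η hη hηδ z
    -- Ekeland applied to φ = F + ε/2‖·‖²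
    set φ : X → EReal := fun w => F w + ((ε / 2 * ‖w‖ ^ 2 : ℝ) : EReal) with hφ
    have hφlsc : LowerSemicontinuous φ :=
      LowerSemicontinuous.add' hFlsc
        ((continuous_coe_real_ereal.comp
          ((continuous_const.mul ((continuous_norm).pow 2)))).lowerSemicontinuous)
        (fun w => EReal.continuousAt_add (.inr (EReal.coe_ne_bot _)) (.inr (EReal.coe_ne_top _)))
    have hφb : ∀ w, ((c0 - ‖xs‖ ^ 2 / (2 * ε) : ℝ) : EReal) ≤ φ w := by
      intro w
      rw [hφ]
      simp only
      have h1 := hFge w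
      have h2 : c0 - ‖xs‖ ^ 2 / (2 * ε) ≤ (c0 - ‖xs‖ * ‖w‖) + ε / 2 * ‖w‖ ^ 2 := by
        have h3 : 0 ≤ ε / 2 * (‖w‖ - ‖xs‖ / ε) ^ 2 := by positivity
        have h4 : ε / 2 * (‖w‖ - ‖xs‖ / ε) ^ 2
            = ε / 2 * ‖w‖ ^ 2 - ‖xs‖ * ‖w‖ + ‖xs‖ ^ 2 / (2 * ε) := by
          field_simp
          ring
        nlinarith
      calc ((c0 - ‖xs‖ ^ 2 / (2 * ε) : ℝ) : EReal)
          ≤ (((c0 - ‖xs‖ * ‖w‖) + ε / 2 * ‖w‖ ^ 2 : ℝ) : EReal) := by exact_mod_cast h2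
        _ = ((c0 - ‖xs‖ * ‖w‖ : ℝ) : EReal) + ((ε / 2 * ‖w‖ ^ 2 : ℝ) : EReal) := by
            rw [← EReal.coe_add]
        _ ≤ F w + ((ε / 2 * ‖w‖ ^ 2 : ℝ) : EReal) := add_le_add_left h1 _
    have hφtop : φ (y₀ - x) ≠ ⊤ := by
      rw [hφ]
      simp only
      have hFt : F (y₀ - x) ≠ ⊤ := by
        rw [hF]
        simp only
        rw [add_sub_cancel]
        exact (EReal.add_lt_top (EReal.coe_ne_top _) hy₀).ne
      exact (EReal.add_lt_top hFt (EReal.coe_ne_top _)).ne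
    obtain ⟨v, hvt, hEk⟩ := ekeland_weak hφlsc hφb hφtop hη
    have hFvt : F v ≠ ⊤ := by
      intro h
      rw [hφ] at hvt
      simp only [h] at hvt
      exact hvt (EReal.top_add_of_ne_bot (EReal.coe_ne_bot _))
    -- the sum rule at v
    set h : X → ℝ := fun w => ε / 2 * ‖w‖ ^ 2 + η * ‖w - v‖ with hh
    have hhconv : ConvexOn ℝ Set.univ h :=
      (convexOn_sqnorm ε hε.le).add (convexOn_normsub η hη.le v)
    have hhcont : Continuous h :=
      ((continuous_const.mul (continuous_norm.pow 2))).add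
        (continuous_const.mul ((continuous_id.sub continuous_const).norm))
    have hmin : ∀ w, F v + ((h v : ℝ) : EReal) ≤ F w + ((h w : ℝ) : EReal) := by
      intro w
      have h1 := hEk w
      rw [hφ] at h1
      simp only at h1
      have hv : h v = ε / 2 * ‖v‖ ^ 2 := by
        rw [hh]; simp
      have hw : (h w : ℝ) = ε / 2 * ‖w‖ ^ 2 + η * ‖w - v‖ := rfl
      rw [hv, hw, EReal.coe_add, ← add_assoc]
      exact h1
    obtain ⟨p, hp1, hp2⟩ := sumrule hFconv hhconv hhcont hFvt (hFbot v) hmin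
    -- transfer: xs - p is a subgradient of f at x + v
    have hsub : (xs - p) ∈ subdiff f (x + v) := by
      intro y
      have h2 := hp2 (y - x)
      rw [hF] at h2
      simp only at h2
      rw [add_sub_cancel] at h2
      have h3 : ((-(xs (y - x)) : ℝ) : EReal) + f y + ((p (y - x - v) : ℝ) : EReal)
          = ((-(xs (y - x)) + p (y - x - v) : ℝ) : EReal) + f y := by
        rw [add_assoc, add_comm (f y) _, ← add_assoc, ← EReal.coe_add]
      rw [h3] at h2
      have h4 := helper1 h2
      have h5 : -(xs v) - (-(xs (y - x)) + p (y - x - v)) = (xs - p) (y - (x + v)) := by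
        simp only [ContinuousLinearMap.sub_apply, map_sub, map_add]
        ring
      rwa [h5] at h4
    -- the relatedness gives p v ≤ 0
    have hpv : p v ≤ 0 := by
      have := hrel (x + v) (xs - p) hsub
      have hxx : (xs - (xs - p)) (x - (x + v)) = -(p v) := by
        simp [map_sub]
      rw [hxx] at this
      linarith
    -- p is a subgradient of h at v, giving a bound on ‖v‖
    have hvsmall : ‖v‖ < δ := by
      have h1 := hp1 0
      have h2 : p (0 - v) = -(p v) := by rw [zero_sub, map_neg]
      have h3 : h 0 = η * ‖v‖ := by rw [hh]; simp
      have h4 : h v = ε / 2 * ‖v‖ ^ 2 := by rw [hh]; simp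
      rw [h2, h3, h4] at h1
      -- -(p v) ≤ η‖v‖ - ε/2‖v‖², and -(p v) ≥ 0
      have h5 : ε / 2 * ‖v‖ ^ 2 ≤ η * ‖v‖ := by linarith
      rcases eq_or_lt_of_le (norm_nonneg v) with h6 | h6
      · rw [← h6]; exact hδ
      · have h7 : ε / 2 * ‖v‖ ≤ η := by
          have := (mul_le_mul_iff_left₀ h6).mpr (le_refl (ε / 2 * ‖v‖))
          nlinarith [h5, h6]
        nlinarith [hη, hε, h6]
    have hmv : ((m : ℝ) : EReal) < F v := hball v hvsmall
    -- conclude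
    have h8 := hEk z
    rw [hφ] at h8
    simp only at h8
    have h9 : ((m : ℝ) : EReal) ≤ F z + ((ε / 2 * ‖z‖ ^ 2 : ℝ) : EReal)
        + ((η * ‖z - v‖ : ℝ) : EReal) := by
      refine le_trans ?_ h8
      refine le_trans hmv.le ?_
      refine le_add_of_nonneg_right ?_
      have : (0 : ℝ) ≤ ε / 2 * ‖v‖ ^ 2 := by positivity
      exact_mod_cast this
    have h10 : η * ‖z - v‖ ≤ η * (‖z‖ + δ) := by
      have := norm_sub_le z v
      nlinarith [hη, hvsmall, norm_nonneg z]
    calc ((m : ℝ) : EReal) ≤ F z + ((ε / 2 * ‖z‖ ^ 2 : ℝ) : EReal)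
        + ((η * ‖z - v‖ : ℝ) : EReal) := h9
      _ ≤ F z + ((ε / 2 * ‖z‖ ^ 2 : ℝ) : EReal) + ((η * (‖z‖ + δ) : ℝ) : EReal) := by
          exact add_le_add_right (by exact_mod_cast h10) _
      _ = F z + ((ε / 2 * ‖z‖ ^ 2 + η * (‖z‖ + δ) : ℝ) : EReal) := by
          rw [add_assoc, ← EReal.coe_add]
  -- remove η, then ε
  have claim3 : ∀ m : ℝ, ((m : ℝ) : EReal) < F 0 → ∀ z : X, ((m : ℝ) : EReal) ≤ F z := by
    intro m hm z
    -- get δ from lower semicontinuity at 0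
    obtain ⟨δ, hδ, hball⟩ : ∃ δ > 0, ∀ w : X, ‖w‖ < δ → ((m : ℝ) : EReal) < F w := by
      have := hFlsc 0 _ hm
      rw [Metric.eventually_nhds_iff] at this
      obtain ⟨δ, hδ, hb2⟩ := this
      exact ⟨δ, hδ, fun w hw => hb2 (by simpa [dist_eq_norm] using hw)⟩
    rcases eq_or_ne (F z) ⊤ with hFz | hFz
    · rw [hFz]; exact le_top
    obtain ⟨r, hr⟩ : ∃ q : ℝ, F z = (q : EReal) := ⟨_, (EReal.coe_toReal hFz (hFbot z)).symm⟩
    rw [hr, EReal.coe_le_coe_iff]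
    by_contra hmr
    push_neg at hmr
    -- first remove η for fixed ε, then let ε → 0; here we do both at once
    -- choose ε small, then η small
    set gap := m - r with hgap
    have hgap0 : 0 < gap := by linarith
    set ε := gap / (‖z‖ ^ 2 + 1) with hε
    have hε0 : 0 < ε := by positivity
    set η := min (ε * δ / 8) (gap / (4 * (‖z‖ + δ + 1))) with hη
    have hη0 : 0 < η := by
      apply lt_min
      · positivity
      · positivity
    have hηδ : 4 * η < ε * δ := by
      have h1 : η ≤ ε * δ / 8 := min_le_left _ _
      nlinarith [hε0, hδ]
    have := claim2 m hm ε hε0 δ hδ hball η hη0 hηδ z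
    rw [hr, ← EReal.coe_add, EReal.coe_le_coe_iff] at this
    -- m ≤ r + ε/2‖z‖² + η(‖z‖+δ) < r + gap/2 + gap/4 < r + gap = m
    have h1 : ε / 2 * ‖z‖ ^ 2 ≤ gap / 2 := by
      have h1a : ε * ‖z‖ ^ 2 ≤ gap := by
        rw [hε, div_mul_eq_mul_div, div_le_iff₀ (by positivity)]
        nlinarith [sq_nonneg ‖z‖, hgap0]
      linarith
    have h2 : η * (‖z‖ + δ) ≤ gap / 4 := by
      have h3 : η ≤ gap / (4 * (‖z‖ + δ + 1)) := min_le_right _ _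
      have h4 : 0 ≤ ‖z‖ + δ := by positivity
      have h5 : η * (‖z‖ + δ) ≤ gap / (4 * (‖z‖ + δ + 1)) * (‖z‖ + δ) :=
        mul_le_mul_of_nonneg_right h3 h4
      refine h5.trans ?_
      rw [div_mul_eq_mul_div, div_le_div_iff₀ (by positivity) (by norm_num)]
      nlinarith [hgap0, h4]
    linarith
  -- conclude : F 0 ≤ F z for all z
  have hfinal : ∀ z, F 0 ≤ F z := by
    intro z
    by_contra hc
    push_neg at hc
    obtain ⟨m, hm1, hm2⟩ := EReal.exists_between_coe_real hc
    exact absurd (claim3 m hm2 z) (not_le.mpr hm1)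
  -- unpack
  intro y
  have h1 := hfinal (y - x)
  rw [hF] at h1
  simp only at h1
  rw [add_sub_cancel, map_zero, neg_zero, add_zero, EReal.coe_zero, zero_add] at h1
  have h2 := add_le_add_right h1 ((xs (y - x) : ℝ) : EReal)
  rw [← add_assoc, ← EReal.coe_add] at h2
  rw [show xs (y - x) + -(xs (y - x)) = 0 by ring] at h2
  rwa [EReal.coe_zero, zero_add] at h2

end MaxMono

/-- characterization of subdifferential operators.  A monotone
linear relation `A` is maximal monotone and symmetric iff `A = ∂f` for some proper
lower semicontinuous convex `f`. -/
theorem maxMonotone_symmetric_iff_subdifferential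
    [CompleteSpace X] (hrefl : ReflexiveReal X)
    (A : X → Set (Dl X)) (hlin : IsLinearRelation A) (hmono : MonotoneOp A) :
    (MaxMonotoneOp A ∧ SymOp A) ↔
      ∃ f : X → EReal, ProperFun f ∧ LowerSemicontinuous f ∧ ConvexFun f ∧
        ∀ x, A x = subdiff f x := by

  constructor
  · rintro ⟨hmax, hsym⟩
    have hproper := fA_proper hlin.1 hmono hsym
    refine ⟨fA A, hproper, fA_lsc, fA_convex, fun x => ?_⟩
    apply Set.eq_of_subset_of_subset
    · intro xs hx
      exact fA_mem_subdiff hmono hsym hx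
    · intro xs hx
      apply hmax.2
      intro y ys hy
      exact Aux.subdiff_monotone hproper.1 hproper.2 hx (fA_mem_subdiff hmono hsym hy)
  · rintro ⟨f, hp, hlsc, hconv, hA⟩
    have hsym : SymOp A := sym_of_subdiff hlin hp hA
    refine ⟨⟨hmono, ?_⟩, hsym⟩
    intro x xs hx
    have h00 : (0 : Dl X) ∈ subdiff f 0 := by rw [← hA]; exact hlin.1
    obtain ⟨y₀, hy₀⟩ := hp.2
    rw [hA]
    exact mem_subdiff_of_related hp.1 hy₀ hlsc hconv h00
      (fun y ys hys => hx y ys (by rw [hA]; exact hys))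

end
end

section
/- Let f : X → (−∞,+∞] be proper, lower semicontinuous, and convex, and let Y be a linear subspace of X. Suppose that the set G = {(x,x*) ∈ X × X* : x ∈ Y and x* ∈ ∂f(x)} is a linear subspace of X × X*. Then this linear relation is symmetric: ⟨x*, y⟩ = ⟨y*, x⟩ for all (x,x*), (y,y*) ∈ G. -/
open Pointwise
open scoped Classical

noncomputable section

variable {X : Type*} [NormedAddCommGroup X] [NormedSpace ℝ X]

/-- A function whose increments are quadratically small is constant. -/
lemma aux_const_of_sq (Q : ℝ → ℝ) (C : ℝ)
    (h : ∀ s t : ℝ, |Q t - Q s| ≤ C * (t - s) ^ 2) : Q 1 = Q 0 := by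
  have hC : 0 ≤ C := by
    have h01 := h 0 1
    nlinarith [abs_nonneg (Q 1 - Q 0)]
  have hd : ∀ x : ℝ, HasDerivAt Q 0 x := by
    intro x
    rw [hasDerivAt_iff_isLittleO, Asymptotics.isLittleO_iff]
    intro c hc
    filter_upwards [Metric.ball_mem_nhds x (show (0:ℝ) < c / (C + 1) by positivity)] with t ht
    have ht' : |t - x| ≤ c / (C + 1) := by
      simpa [Real.dist_eq] using ht.le
    have h2 : C * |t - x| ≤ c := by
      have h3 : C * |t - x| ≤ C * (c / (C + 1)) := mul_le_mul_of_nonneg_left ht' hC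
      have h4 : C * (c / (C + 1)) ≤ c := by
        rw [mul_div_assoc', div_le_iff₀ (by positivity : (0:ℝ) < C + 1)]
        nlinarith
      linarith
    have h5 : C * (t - x) ^ 2 ≤ c * |t - x| := by
      calc C * (t - x) ^ 2 = (C * |t - x|) * |t - x| := by rw [← sq_abs]; ring
        _ ≤ c * |t - x| := mul_le_mul_of_nonneg_right h2 (abs_nonneg _)
    have h6 := (h x t).trans h5
    simpa [Real.norm_eq_abs] using h6
  exact is_const_of_deriv_eq_zero (fun x => (hd x).differentiableAt)
    (fun x => (hd x).deriv) 1 0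

/-- A real function with affine "subgradients" `α + β s` satisfies the
quadratic fundamental theorem formula. -/
lemma aux_quad_formula (F : ℝ → ℝ) (α β : ℝ)
    (h : ∀ s t : ℝ, (t - s) * (α + β * s) ≤ F t - F s) :
    F 1 = F 0 + α + β / 2 := by
  have h2 : ∀ s t : ℝ,
      |(F t - α * t - β * t ^ 2 / 2) - (F s - α * s - β * s ^ 2 / 2)| ≤
        (|β| / 2) * (t - s) ^ 2 := by
    intro s t
    have h1 := h s t
    have h1' := h t s
    have hb1 : β ≤ |β| := le_abs_self β
    have hb2 : -|β| ≤ β := neg_abs_le β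
    rw [abs_le]
    constructor <;> nlinarith [sq_nonneg (t - s)]
  have h3 := aux_const_of_sq (fun t => F t - α * t - β * t ^ 2 / 2) (|β| / 2) h2
  norm_num at h3
  linarith

/-- Let `f` be proper lsc convex and `Y` a linear subspace of `X`.
If `G = {(x,x*) : x ∈ Y, x* ∈ ∂f(x)}` is a linear subspace of `X × X*`, then this
linear relation is symmetric: `⟨x*, y⟩ = ⟨y*, x⟩` for all `(x,x*), (y,y*) ∈ G`. -/
theorem subdiff_plus_indicator_symmetric
    [CompleteSpace X] (hrefl : ReflexiveReal X)
    (f : X → EReal) (hfp : ProperFun f) (hfl : LowerSemicontinuous f)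
    (hfc : ConvexFun f) (Y : Submodule ℝ X)
    (G : Set (X × Dl X)) (hG : G = {p | p.1 ∈ Y ∧ p.2 ∈ subdiff f p.1})
    (hGlin : ∃ V : Submodule ℝ (X × Dl X), (V : Set (X × Dl X)) = G) :
    ∀ p ∈ G, ∀ q ∈ G, p.2 q.1 = q.2 p.1 := by
  obtain ⟨V, hV⟩ := hGlin
  rintro ⟨x, xs⟩ hp ⟨y, ys⟩ hq
  obtain ⟨hne_bot, y₀, hy₀⟩ := hfp
  -- finiteness of `f` at points of the domain of the subdifferential
  have hfin : ∀ (z : X) (zs : Dl X), zs ∈ subdiff f z → f z = ((f z).toReal : EReal) := by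
    intro z zs hz
    have hzt : f z ≠ ⊤ := by
      intro htop
      have h1 := hz y₀
      rw [htop, EReal.coe_add_top _] at h1
      exact hy₀ (top_le_iff.mp h1)
    exact (EReal.coe_toReal hzt (hne_bot z)).symm
  -- real-valued subgradient inequality
  have hreal : ∀ (z w : X) (zs ws : Dl X), zs ∈ subdiff f z → ws ∈ subdiff f w →
      zs (w - z) + (f z).toReal ≤ (f w).toReal := by
    intro z w zs ws hz hw
    have h := hz w
    rw [hfin z zs hz, hfin w ws hw, ← EReal.coe_add] at h
    exact_mod_cast h
  -- linear combinations stay in the graph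
  have hGmem : ∀ s t : ℝ, s • xs + t • ys ∈ subdiff f (s • x + t • y) := by
    intro s t
    have hp' : ((x, xs) : X × Dl X) ∈ V := by rw [← SetLike.mem_coe, hV]; exact hp
    have hq' : ((y, ys) : X × Dl X) ∈ V := by rw [← SetLike.mem_coe, hV]; exact hq
    have hmem : s • ((x, xs) : X × Dl X) + t • ((y, ys) : X × Dl X) ∈ V :=
      V.add_mem (V.smul_mem s hp') (V.smul_mem t hq')
    have hmemG : s • ((x, xs) : X × Dl X) + t • ((y, ys) : X × Dl X) ∈ G := by
      rw [← hV]; exact hmem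
    rw [hG] at hmemG
    exact hmemG.2
  -- key identity along a line in the graph
  have hkey : ∀ (u v : X) (us vs : Dl X),
      (∀ t : ℝ, us + t • vs ∈ subdiff f (u + t • v)) →
      (f (u + v)).toReal = (f u).toReal + (us v + vs v / 2) := by
    intro u v us vs hcurve
    have hF : ∀ s t : ℝ, (t - s) * (us v + vs v * s) ≤
        (f (u + t • v)).toReal - (f (u + s • v)).toReal := by
      intro s t
      have h := hreal (u + s • v) (u + t • v) (us + s • vs) (us + t • vs)
        (hcurve s) (hcurve t)
      have harg : (u + t • v) - (u + s • v) = (t - s) • v := by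
        rw [sub_smul]; abel
      rw [harg] at h
      have happ : (us + s • vs) ((t - s) • v) = (t - s) * (us v + vs v * s) := by
        simp only [ContinuousLinearMap.add_apply, ContinuousLinearMap.smul_apply,
          map_smul, smul_eq_mul]
        ring
      rw [happ] at h
      linarith
    have h1 := aux_quad_formula (fun t => (f (u + t • v)).toReal) (us v) (vs v) hF
    simp only [one_smul, zero_smul, add_zero] at h1
    linarith
  have c1 : ∀ t : ℝ, xs + t • ys ∈ subdiff f (x + t • y) := by
    intro t; simpa using hGmem 1 t
  have c2 : ∀ t : ℝ, ys + t • xs ∈ subdiff f (y + t • x) := by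
    intro t; simpa [add_comm] using hGmem t 1
  have c3 : ∀ t : ℝ, (0 : Dl X) + t • xs ∈ subdiff f ((0 : X) + t • x) := by
    intro t; simpa using hGmem t 0
  have c4 : ∀ t : ℝ, (0 : Dl X) + t • ys ∈ subdiff f ((0 : X) + t • y) := by
    intro t; simpa using hGmem 0 t
  have E1 := hkey x y xs ys c1
  have E2 := hkey y x ys xs c2
  have E3 := hkey 0 x 0 xs c3
  have E4 := hkey 0 y 0 ys c4
  rw [add_comm y x] at E2
  simp only [zero_add, ContinuousLinearMap.zero_apply] at E3 E4
  show xs y = ys x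
  linarith

end
end

section
/- Let f : X → (−∞,+∞] be proper, lower semicontinuous, and convex. Suppose that the graph of ∂f is a linear subspace of X × X* and that dom ∂f is closed. Then ∂f = (∂f)*, i.e. gra ∂f = gra (∂f)*. -/
open Pointwise
open scoped Classical

noncomputable section

variable {X : Type*} [NormedAddCommGroup X] [NormedSpace ℝ X]

open Filter Topology in
/-- Ekeland-type variational principle, bounded real-valued version. -/
theorem ekeland_lite {X : Type*} [NormedAddCommGroup X] [CompleteSpace X]
    (g : X → ℝ) (hg : LowerSemicontinuous g) (c : ℝ) (hc : ∀ x, c ≤ g x)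
    (y : X) (K : ℝ) (hK : 0 < K) :
    ∃ v : X, g v ≤ g y ∧ ‖v - y‖ ≤ (g y - c) / K ∧ ∀ x, g v ≤ g x + K * ‖x - v‖ := by
  classical
  set S : X → Set X := fun u => {x | g x + K * ‖x - u‖ ≤ g u} with hS
  have hmem : ∀ u, u ∈ S u := by intro u; simp [hS]
  have hbdd : ∀ u, BddBelow (g '' S u) := fun u => ⟨c, by rintro r ⟨x, -, rfl⟩; exact hc x⟩
  have hdec : ∀ u x, x ∈ S u → g x ≤ g u := by
    intro u x hx
    have h1 : g x + K * ‖x - u‖ ≤ g u := hx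
    nlinarith [norm_nonneg (x - u), hK]
  have hsub : ∀ u w, w ∈ S u → S w ⊆ S u := by
    intro u w hw x hx
    have h1 : g x + K * ‖x - w‖ ≤ g w := hx
    have h2 : g w + K * ‖w - u‖ ≤ g u := hw
    have htri : ‖x - u‖ ≤ ‖x - w‖ + ‖w - u‖ := norm_sub_le_norm_sub_add_norm_sub x w u
    have : g x + K * ‖x - u‖ ≤ g x + K * (‖x - w‖ + ‖w - u‖) := by nlinarith
    refine this.trans (by linarith)
  -- choice of next point
  have hstep : ∀ (n : ℕ) (u : X), ∃ w ∈ S u, g w < sInf (g '' S u) + (1/2)^n := by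
    intro n u
    obtain ⟨r, ⟨w, hw, rfl⟩, hr⟩ := Real.lt_sInf_add_pos (Set.Nonempty.image g ⟨u, hmem u⟩)
      (by positivity : (0:ℝ) < (1/2)^n)
    exact ⟨w, hw, hr⟩
  choose step hstep1 hstep2 using hstep
  set v : ℕ → X := fun n => Nat.rec y (fun n vn => step n vn) n with hv
  have hv0 : v 0 = y := rfl
  have hvs : ∀ n, v (n+1) = step n (v n) := fun n => rfl
  have hnext : ∀ n, v (n+1) ∈ S (v n) := fun n => hstep1 n (v n)
  have hchain : ∀ n m, n ≤ m → v m ∈ S (v n) := by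
    intro n m hnm
    induction m with
    | zero => cases Nat.le_zero.mp hnm; exact hmem _
    | succ m ih =>
      rcases Nat.lt_or_ge n (m+1) with h | h
      · exact hsub _ _ (ih (Nat.lt_succ_iff.mp h)) (hnext m)
      · have : n = m + 1 := le_antisymm hnm h
        subst this; exact hmem _
  have hmono : ∀ n m, n ≤ m → g (v m) ≤ g (v n) := fun n m h => hdec _ _ (hchain n m h)
  -- g ∘ v converges
  have hml : ∀ n, c ≤ g (v n) := fun n => hc _
  set L : ℝ := ⨅ n, g (v n) with hL
  have hbd : BddBelow (Set.range fun n => g (v n)) := ⟨c, by rintro r ⟨n, rfl⟩; exact hc _⟩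
  have hgl : Tendsto (fun n => g (v n)) atTop (𝓝 L) :=
    tendsto_atTop_ciInf (fun n m h => hmono n m h) hbd
  have hLle : ∀ n, L ≤ g (v n) := fun n => ciInf_le hbd n
  -- v is Cauchy
  have hcau : CauchySeq v := by
    refine cauchySeq_of_le_tendsto_0 (fun n => 2 * (g (v n) - L) / K) (fun n m N hn hm => ?_) ?_
    · have h1 : K * ‖v n - v N‖ ≤ g (v N) - g (v n) := by
        have := hchain N n hn; simpa [hS] using by linarith [show g (v n) + K * ‖v n - v N‖ ≤ g (v N) from this]
      have h2 : K * ‖v m - v N‖ ≤ g (v N) - g (v m) := by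
        have := hchain N m hm; linarith [show g (v m) + K * ‖v m - v N‖ ≤ g (v N) from this]
      have htri : dist (v n) (v m) ≤ ‖v n - v N‖ + ‖v m - v N‖ := by
        rw [dist_eq_norm]
        calc ‖v n - v m‖ ≤ ‖v n - v N‖ + ‖v N - v m‖ := norm_sub_le_norm_sub_add_norm_sub _ _ _
        _ = ‖v n - v N‖ + ‖v m - v N‖ := by rw [norm_sub_rev (v N)]
      have hKd : K * dist (v n) (v m) ≤ 2 * (g (v N) - L) := by
        have := hLle n; have := hLle m
        nlinarith
      show dist (v n) (v m) ≤ 2 * (g (v N) - L) / K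
      rw [le_div_iff₀ hK, mul_comm]
      exact hKd
    · have : Tendsto (fun n => 2 * (g (v n) - L) / K) atTop (𝓝 (2 * (L - L) / K)) := by
        exact ((hgl.sub_const L).const_mul 2).div_const K
      simpa using this
  obtain ⟨w, hw⟩ := cauchySeq_tendsto_of_complete hcau
  -- w ∈ S (v n) for all n
  have hwS : ∀ n, w ∈ S (v n) := by
    intro n
    by_contra hcon
    have hΔ : 0 < g w + K * ‖w - v n‖ - g (v n) := by
      simp only [hS, Set.mem_setOf_eq, not_le] at hcon; linarith
    set Δ := g w + K * ‖w - v n‖ - g (v n) with hΔdef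
    have h1 : ∀ᶠ m in atTop, g w - Δ/2 < g (v m) :=
      hw.eventually (hg w _ (by linarith))
    have h2 : ∀ᶠ m in atTop, K * ‖w - v n‖ - Δ/2 < K * ‖v m - v n‖ := by
      have hcont : Tendsto (fun m => K * ‖v m - v n‖) atTop (𝓝 (K * ‖w - v n‖)) :=
        ((hw.sub_const (v n)).norm.const_mul K)
      exact hcont.eventually (eventually_gt_nhds (by linarith))
    have h3 : ∀ᶠ m in atTop, g (v m) + K * ‖v m - v n‖ ≤ g (v n) :=
      eventually_atTop.mpr ⟨n, fun m hm => hchain n m hm⟩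
    obtain ⟨m, hm1, hm2, hm3⟩ := (h1.and (h2.and h3)).exists
    linarith
  refine ⟨w, hdec _ _ (hwS 0), ?_, ?_⟩
  · have := hwS 0
    have h1 : g w + K * ‖w - y‖ ≤ g y := this
    rw [le_div_iff₀ hK, mul_comm]
    linarith [hc w]
  · intro x
    by_contra hcon
    push_neg at hcon
    have hxS : ∀ n, x ∈ S (v n) := by
      intro n
      exact hsub _ _ (hwS n) (le_of_lt (by simpa [hS] using hcon) : x ∈ S w)
    have hgx : ∀ n : ℕ, g w - (1/2)^n ≤ g x := by
      intro n
      have h1 : g (v (n+1)) < sInf (g '' S (v n)) + (1/2)^n := hstep2 n (v n)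
      have h2 : sInf (g '' S (v n)) ≤ g x := csInf_le (hbdd _) ⟨x, hxS n, rfl⟩
      have h3 : g w ≤ g (v (n+1)) := hdec _ _ (hwS (n+1))
      linarith
    have hle : g w ≤ g x := by
      by_contra hlt
      push_neg at hlt
      obtain ⟨n, hn⟩ := exists_pow_lt_of_lt_one (by linarith : (0:ℝ) < g w - g x) (by norm_num : (1:ℝ)/2 < 1)
      have := hgx n
      linarith
    have : 0 ≤ K * ‖x - w‖ := by positivity
    linarith


/-- A function with `h 0 = 0` and `|h s - h t| ≤ C (s-t)^2` is identically zero. -/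
theorem holder2_zero (h : ℝ → ℝ) (h0 : h 0 = 0) (C : ℝ)
    (hC : ∀ s t : ℝ, |h s - h t| ≤ C * (s - t)^2) : ∀ t, h t = 0 := by
  intro t
  have hCnn : 0 ≤ C := by
    have := hC 1 0
    nlinarith [abs_nonneg (h 1 - h 0)]
  have key : ∀ n : ℕ, 0 < n → |h t| ≤ C * t^2 / n := by
    intro n hn
    set F : ℕ → ℝ := fun k => h (k * t / n) with hF
    have hn' : (n:ℝ) ≠ 0 := Nat.cast_ne_zero.mpr hn.ne'
    have htel : F n - F 0 = ∑ k ∈ Finset.range n, (F (k+1) - F k) :=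
      (Finset.sum_range_sub F n).symm
    have hFn : F n = h t := by simp only [hF]; rw [show (n:ℝ) * t / n = t from by field_simp]
    have hF0 : F 0 = 0 := by simp [hF, h0]
    have hb : ∀ k ∈ Finset.range n, |F (k+1) - F k| ≤ C * t^2 / n^2 := by
      intro k _
      simp only [hF]
      refine (hC _ _).trans ?_
      have : ((k:ℕ)+1 : ℕ) * t / n - (k:ℕ) * t / n = t / n := by push_cast; field_simp; ring
      rw [this, div_pow]
      exact le_of_eq (by ring)
    calc |h t| = |∑ k ∈ Finset.range n, (F (k+1) - F k)| := by
          rw [← htel, hFn, hF0, sub_zero]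
    _ ≤ ∑ k ∈ Finset.range n, |F (k+1) - F k| := Finset.abs_sum_le_sum_abs _ _
    _ ≤ ∑ _k ∈ Finset.range n, C * t^2 / n^2 := Finset.sum_le_sum hb
    _ = n * (C * t^2 / n^2) := by rw [Finset.sum_const, Finset.card_range, nsmul_eq_mul]
    _ = C * t^2 / n := by
        have hn' : (n:ℝ) ≠ 0 := Nat.cast_ne_zero.mpr hn.ne'
        field_simp
  by_contra hne
  have hpos : 0 < |h t| := abs_pos.mpr hne
  obtain ⟨n, hn⟩ := exists_nat_gt (C * t^2 / |h t|)
  have hn0 : 0 < n := by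
    by_contra h'
    push_neg at h'
    interval_cases n
    · have : 0 ≤ C * t^2 / |h t| := by positivity
      linarith
  have h1 := key n hn0
  have h2 : C * t^2 / |h t| < n := hn
  rw [div_lt_iff₀ hpos] at h2
  rw [le_div_iff₀ (by exact_mod_cast hn0 : (0:ℝ) < n)] at h1
  nlinarith


theorem exists_subgradient (f : X → EReal) (hfp : ∀ x, f x ≠ ⊥) (hfc : ConvexFun f)
    (v : X) (fv : ℝ) (hfv : f v = (fv : EReal)) (K : ℝ) (hK : 0 ≤ K)
    (hmin : ∀ x : X, f x ≠ ⊤ → fv ≤ (f x).toReal + K * ‖x - v‖) :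
    (subdiff f v).Nonempty := by
  classical
  set U : Set (X × ℝ) := {p | p.2 < fv - K * ‖p.1 - v‖} with hU
  set Ep : Set (X × ℝ) := {p | f p.1 ≤ (p.2 : EReal)} with hEp
  have hUopen : IsOpen U :=
    isOpen_lt continuous_snd
      (by fun_prop : Continuous fun p : X × ℝ => fv - K * ‖p.1 - v‖)
  have hUconv : Convex ℝ U := by
    rintro ⟨x1, r1⟩ h1 ⟨x2, r2⟩ h2 a b ha hb hab
    simp only [hU, Set.mem_setOf_eq] at h1 h2 ⊢
    have hvv : a • v + b • v = v := by rw [← add_smul, hab, one_smul]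
    have hco : (a • x1 + b • x2) - v = a • (x1 - v) + b • (x2 - v) := by
      have h' : a • (x1 - v) + b • (x2 - v) = a • x1 + b • x2 - (a • v + b • v) := by
        rw [smul_sub, smul_sub]; abel
      rw [h', hvv]
    have hn : ‖(a • x1 + b • x2) - v‖ ≤ a * ‖x1 - v‖ + b * ‖x2 - v‖ := by
      rw [hco]
      refine (norm_add_le _ _).trans ?_
      rw [norm_smul, norm_smul, Real.norm_of_nonneg ha, Real.norm_of_nonneg hb]
    have hKn := mul_le_mul_of_nonneg_left hn hK
    rcases eq_or_lt_of_le ha with rfl | ha'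
    · have hb1 : b = 1 := by linarith
      subst hb1
      simpa using h2
    rcases eq_or_lt_of_le hb with rfl | hb'
    · have ha1 : a = 1 := by linarith
      subst ha1
      simpa using h1
    have e1 : a * r1 < a * (fv - K * ‖x1 - v‖) := mul_lt_mul_of_pos_left h1 ha'
    have e2 : b * r2 < b * (fv - K * ‖x2 - v‖) := mul_lt_mul_of_pos_left h2 hb'
    have hfv2 : a * fv + b * fv = fv := by rw [← add_mul, hab, one_mul]
    have : a * r1 + b * r2 < fv - K * (a * ‖x1 - v‖ + b * ‖x2 - v‖) := by nlinarith [e1, e2, hfv2]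
    calc (a • (x1, r1) + b • (x2, r2)).2 = a * r1 + b * r2 := rfl
    _ < fv - K * (a * ‖x1 - v‖ + b * ‖x2 - v‖) := this
    _ ≤ fv - K * ‖(a • (x1, r1) + b • (x2, r2)).1 - v‖ := by
        have : (a • (x1, r1) + b • (x2, r2)).1 = a • x1 + b • x2 := rfl
        rw [this]; linarith
  have hEpconv : Convex ℝ Ep := by
    rintro ⟨x1, r1⟩ h1 ⟨x2, r2⟩ h2 a b ha hb hab
    simp only [hEp, Set.mem_setOf_eq] at h1 h2 ⊢
    have hx1t : f x1 ≠ ⊤ := fun h => by rw [h] at h1; simp at h1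
    have hx2t : f x2 ≠ ⊤ := fun h => by rw [h] at h2; simp at h2
    set s1 := (f x1).toReal with hs1
    set s2 := (f x2).toReal with hs2
    have hfx1 : f x1 = (s1 : EReal) := (EReal.coe_toReal hx1t (hfp x1)).symm
    have hfx2 : f x2 = (s2 : EReal) := (EReal.coe_toReal hx2t (hfp x2)).symm
    have hs1le : s1 ≤ r1 := by rw [hfx1] at h1; exact_mod_cast h1
    have hs2le : s2 ≤ r2 := by rw [hfx2] at h2; exact_mod_cast h2
    have := hfc x1 x2 a b ha hb hab
    rw [hfx1, hfx2] at this
    refine this.trans ?_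
    rw [← EReal.coe_mul, ← EReal.coe_mul, ← EReal.coe_add]
    change ((a * s1 + b * s2 : ℝ) : EReal) ≤ ((a * r1 + b * r2 : ℝ) : EReal)
    exact_mod_cast by nlinarith
  have hdisj : Disjoint U Ep := by
    rw [Set.disjoint_left]
    rintro ⟨x, r⟩ hxU hxEp
    simp only [hU, Set.mem_setOf_eq] at hxU
    simp only [hEp, Set.mem_setOf_eq] at hxEp
    have hxt : f x ≠ ⊤ := fun h => by rw [h] at hxEp; simp at hxEp
    have h1 : (f x).toReal ≤ r := by
      have := EReal.toReal_le_toReal hxEp (hfp x) (EReal.coe_ne_top r)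
      simpa using this
    have := hmin x hxt
    linarith
  obtain ⟨φ, u, hUlt, hEge⟩ := geometric_hahn_banach_open hUconv hUopen hEpconv hdisj
  set ψ : Dl X := (φ.comp (ContinuousLinearMap.inl ℝ X ℝ) : X →L[ℝ] ℝ) with hψ
  set c : ℝ := φ (0, 1) with hc
  have hφ : ∀ (x : X) (r : ℝ), φ (x, r) = ψ x + r * c := by
    intro x r
    have h1 : (x, r) = (x, (0:ℝ)) + ((0:X), r) := by simp
    have h2 : ((0:X), r) = r • ((0:X), (1:ℝ)) := by simp
    rw [h1, map_add, h2, map_smul]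
    simp [hψ, hc, ContinuousLinearMap.inl_apply, smul_eq_mul]
  have hvU : ∀ r : ℝ, r < fv → ψ v + r * c < u := by
    intro r hr
    have : ((v, r) : X × ℝ) ∈ U := by simp [hU, hr]
    have := hUlt _ this
    rwa [hφ] at this
  have hvEp : u ≤ ψ v + fv * c := by
    have : ((v, fv) : X × ℝ) ∈ Ep := by simp [hEp, hfv]
    have := hEge _ this
    rwa [hφ] at this
  have hcpos : 0 < c := by
    have h1 := hvU (fv - 1) (by linarith)
    nlinarith
  have huge : ψ v + fv * c ≤ u := by
    by_contra hcon
    push_neg at hcon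
    set ε := (ψ v + fv * c - u) / 2 with hε
    have hεpos : 0 < ε := by simp [hε]; linarith
    have := hvU (fv - ε / c) (by linarith [div_pos hεpos hcpos])
    have hh : ψ v + (fv - ε / c) * c = ψ v + fv * c - ε := by field_simp; try ring
    rw [hh] at this
    linarith
  refine ⟨(-c⁻¹) • ψ, ?_⟩
  intro y
  rcases eq_or_ne (f y) ⊤ with hyt | hyt
  · rw [hyt]; exact le_top
  set fy := (f y).toReal with hfy
  have hfyy : f y = (fy : EReal) := (EReal.coe_toReal hyt (hfp y)).symm
  have hyEp : ((y, fy) : X × ℝ) ∈ Ep := by simp [hEp, hfyy]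
  have h1 : ψ v + fv * c ≤ ψ y + fy * c := le_trans huge (by rw [← hφ]; exact hEge _ hyEp)
  have h2 : ((-c⁻¹) • ψ) (y - v) + fv ≤ fy := by
    have : ((-c⁻¹) • ψ) (y - v) = -c⁻¹ * (ψ y - ψ v) := by
      simp [ContinuousLinearMap.smul_apply, map_sub, mul_sub]
    rw [this]
    have hc' : c ≠ 0 := ne_of_gt hcpos
    have h5 : (-c⁻¹ * (ψ y - ψ v) + fv) * c = -(ψ y - ψ v) + fv * c := by field_simp; try ring
    have h6 : (-c⁻¹ * (ψ y - ψ v) + fv) * c ≤ fy * c := by rw [h5]; linarith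
    exact le_of_mul_le_mul_right h6 hcpos
  rw [hfv, hfyy]
  rw [show ((((-c⁻¹) • ψ) ((y - v)) : ℝ) : EReal) + ((fv : ℝ) : EReal)
      = (((((-c⁻¹) • ψ) (y - v) + fv : ℝ)) : EReal) from (EReal.coe_add _ _).symm]
  exact_mod_cast h2


set_option maxHeartbeats 2000000 in
/-- Let `f` be proper lsc convex such that `gra ∂f` is a linear
subspace of `X × X*` and `dom ∂f` is closed.  Then `∂f = (∂f)*`. -/
theorem subdiff_linearRelation_selfAdjoint
    [CompleteSpace X] (hrefl : ReflexiveReal X)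
    (f : X → EReal) (hfp : ProperFun f) (hfl : LowerSemicontinuous f)
    (hfc : ConvexFun f)
    (hlin : ∃ V : Submodule ℝ (X × Dl X), (V : Set (X × Dl X)) = graphOf (subdiff f))
    (hdom : IsClosed (domOf (subdiff f))) :
    graphOf (subdiff f) = graphOf (adjointRel (subdiff f)) := by
  classical
  obtain ⟨V, hV⟩ := hlin
  have hiff : ∀ (x : X) (xs : Dl X), xs ∈ subdiff f x ↔ (x, xs) ∈ V := by
    intro x xs
    constructor
    · intro h; rw [← SetLike.mem_coe, hV]; exact h
    · intro h; rw [← SetLike.mem_coe, hV] at h; exact h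
  have hzero : (0 : Dl X) ∈ subdiff f 0 := by
    rw [hiff]; exact V.zero_mem
  have hadd : ∀ {x xs y ys}, xs ∈ subdiff f x → ys ∈ subdiff f y →
      xs + ys ∈ subdiff f (x + y) := by
    intro x xs y ys hx hy
    rw [hiff] at hx hy ⊢
    exact V.add_mem hx hy
  have hsmul : ∀ (c : ℝ) {x xs}, xs ∈ subdiff f x → c • xs ∈ subdiff f (c • x) := by
    intro c x xs hx
    rw [hiff] at hx ⊢
    exact V.smul_mem c hx
  have hf0min : ∀ z, f 0 ≤ f z := by
    intro z
    have := hzero z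
    simpa using this
  obtain ⟨y₀, hy₀⟩ := hfp.2
  have hf0top : f 0 ≠ ⊤ := fun h => hy₀ (top_le_iff.mp (h ▸ hf0min y₀))
  have hfx_ne_top : ∀ {x xs}, xs ∈ subdiff f x → f x ≠ ⊤ := by
    intro x xs hxs h
    have := hxs y₀
    rw [h, EReal.add_top_of_ne_bot (EReal.coe_ne_bot _)] at this
    exact hy₀ (top_le_iff.mp this)
  set fr : X → ℝ := fun x => (f x).toReal with hfr_def
  have hfr : ∀ x, f x ≠ ⊤ → f x = ((fr x : ℝ) : EReal) :=
    fun x h => (EReal.coe_toReal h (hfp.1 x)).symm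
  have hsub_real : ∀ {x xs} (y : X), xs ∈ subdiff f x → f y ≠ ⊤ →
      xs (y - x) + fr x ≤ fr y := by
    intro x xs y hxs hy
    have h := hxs y
    rw [hfr x (hfx_ne_top hxs), hfr y hy, ← EReal.coe_add] at h
    exact_mod_cast h
  have hfr0le : ∀ x, f x ≠ ⊤ → fr 0 ≤ fr x :=
    fun x h => EReal.toReal_le_toReal (hf0min x) (hfp.1 0) h
  -- quadratic formula
  have hquad : ∀ {x xs}, xs ∈ subdiff f x → fr x = fr 0 + xs x / 2 := by
    intro x xs hxs
    set α := xs x with hα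
    have hpair : ∀ t : ℝ, t • xs ∈ subdiff f (t • x) := fun t => hsmul t hxs
    have htop : ∀ t : ℝ, f (t • x) ≠ ⊤ := fun t => hfx_ne_top (hpair t)
    have hα0 : 0 ≤ α := by
      have h1 := hsub_real (0 : X) hxs hf0top
      have h2 := hfr0le x (hfx_ne_top hxs)
      have h3 : xs (0 - x) = -α := by rw [zero_sub, map_neg]
      linarith [h1, h2, h3.symm.le, h3.le]
    have key : ∀ s t : ℝ, t * (s * α - t * α) + fr (t • x) ≤ fr (s • x) := by
      intro s t
      have h := hsub_real (s • x) (hpair t) (htop s)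
      have he : (t • xs) (s • x - t • x) = t * (s * α - t * α) := by
        rw [ContinuousLinearMap.smul_apply, map_sub, map_smul, map_smul]
        simp [smul_eq_mul, hα]
      rwa [he] at h
    set h : ℝ → ℝ := fun t => fr (t • x) - fr 0 - α * t ^ 2 / 2 with hh
    have h0 : h 0 = 0 := by simp [hh]
    have hbd : ∀ s t : ℝ, |h s - h t| ≤ (α / 2) * (s - t) ^ 2 := by
      intro s t
      rw [abs_sub_le_iff]
      constructor
      · have := key t s
        simp only [hh]
        nlinarith [this]
      · have := key s t
        simp only [hh]
        nlinarith [this]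
    have := holder2_zero h h0 (α / 2) hbd 1
    simp only [hh, one_smul, one_pow] at this
    linarith
  -- symmetry
  have hsym : ∀ {x xs a as}, xs ∈ subdiff f x → as ∈ subdiff f a → xs a = as x := by
    intro x xs a as hxs has
    set β := xs a with hβ
    set γ := as x with hγ
    set δ := as a with hδ
    have hδ0 : 0 ≤ δ := by
      have h1 := hsub_real (0 : X) has hf0top
      have h2 := hfr0le a (hfx_ne_top has)
      have h3 : as (0 - a) = -δ := by rw [zero_sub, map_neg]
      linarith [h3.le, h3.symm.le]
    have hpair : ∀ t : ℝ, xs + t • as ∈ subdiff f (x + t • a) :=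
      fun t => hadd hxs (hsmul t has)
    have hq1 := hquad hxs
    have key2 : ∀ t : ℝ, t * (β - γ) ≤ t ^ 2 * δ := by
      intro t
      have hq2 := hquad (hpair t)
      have hsg := hsub_real (x + t • a) hxs (hfx_ne_top (hpair t))
      have he1 : xs (x + t • a - x) = t * β := by
        rw [add_sub_cancel_left, map_smul, smul_eq_mul]
      have he2 : (xs + t • as) (x + t • a) = xs x + t * β + (t * γ + t * (t * δ)) := by
        simp only [ContinuousLinearMap.add_apply, ContinuousLinearMap.smul_apply, map_add,
          map_smul, smul_eq_mul]
        ring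
      rw [he1] at hsg
      rw [he2] at hq2
      nlinarith [hsg, hq1, hq2]
    have hβγ : β = γ := by
      by_contra hne
      have habs : 0 < |β - γ| := abs_pos.mpr (sub_ne_zero.mpr hne)
      set t := |β - γ| / (2 * (δ + 1)) with ht
      have htpos : 0 < t := by positivity
      have k1 := key2 t
      have k2 := key2 (-t)
      have k3 : t * |β - γ| ≤ t ^ 2 * δ := by
        rcases abs_cases (β - γ) with ⟨he, -⟩ | ⟨he, -⟩
        · rw [he] at *; nlinarith [k1]
        · rw [he] at *; nlinarith [k2]
      have k4 : |β - γ| ≤ t * δ := by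
        have := (mul_le_mul_iff_right₀ htpos).mp (by nlinarith [k3] : t * |β - γ| ≤ t * (t * δ))
        exact this
      rw [ht] at k4
      rw [div_mul_eq_mul_div, le_div_iff₀ (by positivity : (0:ℝ) < 2 * (δ + 1))] at k4
      nlinarith [k4, habs, hδ0]
    exact hβγ
  -- density of the domain
  have hdense : ∀ y : X, f y ≠ ⊤ → y ∈ domOf (subdiff f) := by
    intro y hy
    rw [← hdom.closure_eq]
    rw [Metric.mem_closure_iff]
    intro ε hε
    set m := fr y with hm
    set M := m + 1 with hM
    have hfym : f y = ((m : ℝ) : EReal) := hfr y hy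
    have hm0 : fr 0 ≤ m := hfr0le y hy
    set F : X → EReal := fun x => min (f x) ((M : ℝ) : EReal) with hF
    have hFtop : ∀ x, F x ≠ ⊤ := by
      intro x h
      have : F x ≤ ((M : ℝ) : EReal) := min_le_right _ _
      rw [h] at this
      exact (EReal.coe_ne_top M) (top_le_iff.mp this)
    have hFbot : ∀ x, F x ≠ ⊥ := by
      intro x h
      rcases min_cases (f x) ((M : ℝ) : EReal) with ⟨he, -⟩ | ⟨he, -⟩
      · rw [hF] at h; simp only at h; rw [he] at h; exact hfp.1 x h
      · rw [hF] at h; simp only at h; rw [he] at h; exact EReal.coe_ne_bot M h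
    set g : X → ℝ := fun x => (F x).toReal with hg
    have hglb : ∀ x, fr 0 ≤ g x := by
      intro x
      have h1 : ((fr 0 : ℝ) : EReal) ≤ F x := by
        rw [le_min_iff]
        refine ⟨?_, ?_⟩
        · rw [← hfr 0 hf0top]; exact hf0min x
        · exact_mod_cast by linarith
      have := EReal.toReal_le_toReal h1 (EReal.coe_ne_bot _) (hFtop x)
      simpa using this
    have hgy : g y = m := by
      have : F y = ((m : ℝ) : EReal) := by
        rw [hF]; simp only; rw [hfym]
        exact min_eq_left (by exact_mod_cast by linarith)
      rw [hg]; simp only; rw [this]; simp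
    have hglsc : LowerSemicontinuous g := by
      intro x r hr
      have hFx : F x = ((g x : ℝ) : EReal) := (EReal.coe_toReal (hFtop x) (hFbot x)).symm
      have h1 : ((r : ℝ) : EReal) < f x := by
        have : ((r : ℝ) : EReal) < F x := by rw [hFx]; exact_mod_cast hr
        exact this.trans_le (min_le_left _ _)
      have h2 : r < M := by
        have : ((r : ℝ) : EReal) < ((M : ℝ) : EReal) := by
          have : ((r : ℝ) : EReal) < F x := by rw [hFx]; exact_mod_cast hr
          exact this.trans_le (min_le_right _ _)
        exact_mod_cast this
      have h3 := hfl x _ h1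
      filter_upwards [h3] with z hz
      have h4 : ((r : ℝ) : EReal) < F z := lt_min hz (by exact_mod_cast h2)
      have hFz : F z = ((g z : ℝ) : EReal) := (EReal.coe_toReal (hFtop z) (hFbot z)).symm
      rw [hFz] at h4
      exact_mod_cast h4
    set K := (m - fr 0) / (ε / 2) + 1 with hK
    have hKpos : 0 < K := by
      have h0 : 0 ≤ (m - fr 0) / (ε / 2) := div_nonneg (by linarith) (by linarith)
      rw [hK]; linarith
    obtain ⟨v, hv1, hv2, hv3⟩ := ekeland_lite g hglsc (fr 0) hglb y K hKpos
    have hvy : ‖v - y‖ ≤ ε / 2 := by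
      refine hv2.trans ?_
      rw [hgy, div_le_iff₀ hKpos]
      have h1 : (m - fr 0) / (ε / 2) * (ε/2) = m - fr 0 := by
        field_simp
      nlinarith [h1]
    have hgvm : g v ≤ m := by rw [← hgy]; exact hv1
    have hfv : f v = ((g v : ℝ) : EReal) := by
      have hFv : F v = ((g v : ℝ) : EReal) := (EReal.coe_toReal (hFtop v) (hFbot v)).symm
      rcases min_cases (f v) ((M : ℝ) : EReal) with ⟨he, -⟩ | ⟨he, hle⟩
      · rw [← he]; rw [hF] at hFv; exact hFv
      · exfalso
        have : F v = ((M : ℝ) : EReal) := he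
        rw [hFv] at this
        have : g v = M := by exact_mod_cast this
        rw [hM] at this
        linarith
    have hmin : ∀ x : X, f x ≠ ⊤ → g v ≤ (f x).toReal + K * ‖x - v‖ := by
      intro x hx
      by_cases hxM : f x < ((M : ℝ) : EReal)
      · have hFx : F x = f x := min_eq_left hxM.le
        have hgx : g x = (f x).toReal := by rw [hg]; simp only; rw [hFx]
        have := hv3 x
        rwa [hgx] at this
      · push_neg at hxM
        have h1 : M ≤ (f x).toReal := by
          have := EReal.toReal_le_toReal hxM (EReal.coe_ne_bot _) hx
          simpa using this
        have h2 : 0 ≤ K * ‖x - v‖ := by positivity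
        have h3 : g v ≤ m := hgvm
        rw [hM] at h1
        linarith
    obtain ⟨xs, hxs⟩ := exists_subgradient f hfp.1 hfc v (g v) hfv K hKpos.le hmin
    exact ⟨v, ⟨xs, hxs⟩, by
      rw [dist_eq_norm, norm_sub_rev]
      linarith [hvy, hε]⟩
  -- perpendicular functionals are subgradients at 0
  have hperp : ∀ z : Dl X, (∀ a ∈ domOf (subdiff f), z a = 0) → z ∈ subdiff f 0 := by
    intro z hz y
    rcases eq_or_ne (f y) ⊤ with hy | hy
    · rw [hy]; exact le_top
    · have hyD := hdense y hy
      have : z (y - 0) = 0 := by rw [sub_zero]; exact hz y hyD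
      rw [this]
      simpa using hf0min y
  have hD0 : (0 : X) ∈ domOf (subdiff f) := ⟨0, hzero⟩
  have hDconv : Convex ℝ (domOf (subdiff f)) := by
    rintro x ⟨xs, hxs⟩ y ⟨ys, hys⟩ a b ha hb hab
    exact ⟨a • xs + b • ys, hadd (hsmul a hxs) (hsmul b hys)⟩
  have hDsmul : ∀ (t : ℝ) {x}, x ∈ domOf (subdiff f) → t • x ∈ domOf (subdiff f) := by
    rintro t x ⟨xs, hxs⟩
    exact ⟨t • xs, hsmul t hxs⟩
  -- conclusion
  ext ⟨x, xs⟩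
  constructor
  · intro h
    have hx : xs ∈ subdiff f x := h
    intro a as has
    exact hsym hx has
  · intro h
    have hx : ∀ (a : X) (as : Dl X), as ∈ subdiff f a → xs a = as x := h
    have hxD : x ∈ domOf (subdiff f) := by
      by_contra hnot
      obtain ⟨φ, u, hball, hxu⟩ := geometric_hahn_banach_closed_point hDconv hdom hnot
      have hu0 : 0 < u := by
        have := hball 0 hD0
        simpa using this
      have hφ0 : ∀ d ∈ domOf (subdiff f), φ d = 0 := by
        intro d hd
        by_contra hda
        have h1 := hball (((u + 1) / φ d) • d) (hDsmul _ hd)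
        rw [map_smul, smul_eq_mul, div_mul_cancel₀ _ hda] at h1
        linarith
      have hφA : φ ∈ subdiff f 0 := hperp φ hφ0
      have := hx 0 φ hφA
      rw [map_zero] at this
      rw [← this] at hxu
      linarith
    obtain ⟨ys, hys⟩ := hxD
    have hzperp : ∀ a ∈ domOf (subdiff f), (xs - ys) a = 0 := by
      rintro a ⟨as, has⟩
      have h1 : xs a = as x := hx a as has
      have h2 : ys a = as x := hsym hys has
      rw [ContinuousLinearMap.sub_apply, h1, h2, sub_self]
    have hzA : xs - ys ∈ subdiff f 0 := hperp _ hzperp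
    have := hadd hys hzA
    rw [add_zero, add_sub_cancel] at this
    exact this

end
end

section
/- Let A : X ⇉ X* be a monotone linear relation and let Z be a closed linear subspace of X with Z ⊆ dom A. Define B : X ⇉ X* by Bx = Ax + Z^⊥ (Minkowski sum) if x ∈ Z and Bx = ∅ otherwise, where Z^⊥ = {x* ∈ X* : ⟨x*, z⟩ = 0 for all z ∈ Z}. Then B is maximal monotone and dom B = Z. -/
open Pointwise
open scoped Classical

noncomputable section

variable {X : Type*} [NormedAddCommGroup X] [NormedSpace ℝ X]

/-- shrink and dilate.  Let `A` be a monotone linear relation and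
`Z ⊆ dom A` a closed subspace.  Then `B := (A + 𝕀_Z) + Z^⊥` is maximal monotone
with `dom B = Z`. -/
theorem shrink_and_dilate_maxMonotone
    [CompleteSpace X] (hrefl : ReflexiveReal X)
    (A : X → Set (Dl X)) (hlin : IsLinearRelation A) (hmono : MonotoneOp A)
    (Z : Submodule ℝ X) (hZc : IsClosed (Z : Set X)) (hZd : (Z : Set X) ⊆ domOf A)
    (B : X → Set (Dl X))
    (hB : ∀ x, B x = {xs | x ∈ Z ∧ xs ∈ A x + {zs : Dl X | ∀ z ∈ Z, zs z = 0}}) :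
    MaxMonotoneOp B ∧ domOf B = (Z : Set X) := by
  obtain ⟨h0, hadd, hsmul⟩ := hlin
  -- membership characterization for B
  have hBmem : ∀ x xs, xs ∈ B x ↔
      x ∈ Z ∧ ∃ a ∈ A x, ∃ w : Dl X, (∀ z ∈ Z, w z = 0) ∧ a + w = xs := by
    intro x xs
    rw [hB]
    constructor
    · rintro ⟨hx, hsum⟩
      obtain ⟨a, ha, w, hw, haw⟩ := Set.mem_add.mp hsum
      exact ⟨hx, a, ha, w, hw, haw⟩
    · rintro ⟨hx, a, ha, w, hw, haw⟩
      exact ⟨hx, Set.mem_add.mpr ⟨a, ha, w, hw, haw⟩⟩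
  -- monotonicity of B
  have hBmono : MonotoneOp B := by
    intro x xs y ys hx hy
    obtain ⟨hxZ, a, ha, w, hw, haw⟩ := (hBmem x xs).mp hx
    obtain ⟨hyZ, b, hb, v, hv, hbv⟩ := (hBmem y ys).mp hy
    have hab := hmono ha hb
    have hxy : (xs - ys) (x - y) = (a - b) (x - y) := by
      rw [← haw, ← hbv]
      simp only [ContinuousLinearMap.sub_apply, ContinuousLinearMap.add_apply, map_sub,
        hw x hxZ, hw y hyZ, hv x hxZ, hv y hyZ]
      ring
    rw [hxy]; exact hab
  -- domain of B
  have hBdom : domOf B = (Z : Set X) := by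
    ext x
    constructor
    · rintro ⟨xs, hxs⟩
      exact ((hBmem x xs).mp hxs).1
    · intro hx
      obtain ⟨a, ha⟩ := hZd hx
      exact ⟨a + 0, (hBmem x (a + 0)).mpr ⟨hx, a, ha, 0, fun z _ => rfl, rfl⟩⟩
  refine ⟨⟨hBmono, ?_⟩, hBdom⟩
  -- maximality
  intro x xs h
  -- the elements of B at points of Z
  have hBel : ∀ z ∈ Z, ∀ a ∈ A z, ∀ w : Dl X, (∀ u ∈ Z, w u = 0) → a + w ∈ B z :=
    fun z hz a ha w hw => (hBmem z (a + w)).mpr ⟨hz, a, ha, w, hw, rfl⟩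
  -- Step 1: every annihilator element vanishes at x
  have hann : ∀ w : Dl X, (∀ u ∈ Z, w u = 0) → w x = 0 := by
    intro w hw
    by_contra hwx
    -- for every t, 0 ≤ (xs - t • w) x = xs x - t * w x
    have key : ∀ t : ℝ, 0 ≤ xs x - t * w x := by
      intro t
      have hm : t • w ∈ B 0 := by
        have := hBel 0 Z.zero_mem 0 h0 (t • w)
          (fun u hu => by simp [hw u hu]) 
        simpa using this
      have := h 0 (t • w) hm
      simpa [ContinuousLinearMap.sub_apply, ContinuousLinearMap.smul_apply,
        smul_eq_mul] using this
    have h1 := key ((xs x + 1) / (w x))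
    rw [div_mul_cancel₀ _ hwx] at h1
    linarith
  -- Step 2: x ∈ Z, via Hahn-Banach separation
  have hxZ : x ∈ Z := by
    by_contra hx
    obtain ⟨f, u, hfx, hfb⟩ :=
      geometric_hahn_banach_point_closed Z.convex hZc hx
    -- f vanishes on Z
    have hfZ : ∀ z ∈ Z, f z = 0 := by
      intro z hz
      by_contra hfz
      have hm : ((u - 1) / f z) • z ∈ Z := Z.smul_mem _ hz
      have := hfb _ hm
      rw [map_smul, smul_eq_mul, div_mul_cancel₀ _ hfz] at this
      linarith
    have hu0 : u < 0 := by simpa using hfb 0 Z.zero_mem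
    have := hann f hfZ
    linarith
  -- Step 3: pick a ∈ A x and show xs - a annihilates Z
  obtain ⟨a, ha⟩ := hZd hxZ
  have key : ∀ z ∈ Z, 0 ≤ (xs - a) z := by
    intro z hz
    obtain ⟨az, haz⟩ := hZd hz
    -- a_z z ≥ 0
    have hd : 0 ≤ az z := by
      have := hmono haz h0
      simpa using this
    have hc : ∀ t : ℝ, 0 < t → 0 ≤ (xs - a) z + t * az z := by
      intro t ht
      have hmem : a + (-t) • az ∈ A (x + (-t) • z) := hadd _ _ _ _ ha (hsmul (-t) z az haz)
      have hmem' : a + (-t) • az + 0 ∈ B (x + (-t) • z) :=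
        hBel _ (Z.add_mem hxZ (Z.smul_mem _ hz)) _ hmem 0 (fun u _ => rfl)
      have hineq := h _ _ hmem'
      have hval : (xs - (a + (-t) • az + 0)) (x - (x + (-t) • z)) =
          t * ((xs - a) z + t * az z) := by
        simp only [ContinuousLinearMap.sub_apply, ContinuousLinearMap.add_apply,
          ContinuousLinearMap.smul_apply, ContinuousLinearMap.zero_apply, map_sub, map_add,
          map_smul, smul_eq_mul, map_neg, neg_smul, ContinuousLinearMap.neg_apply]
        ring
      rw [hval] at hineq
      nlinarith
    -- limit as t → 0⁺
    by_contra hcc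
    push_neg at hcc
    set c := (xs - a) z with hcdef
    set d := az z with hddef
    have hc' : 0 < -c := by linarith
    have ht : (0:ℝ) < -c / (2 * (d + 1)) := by positivity
    have h2 : (0:ℝ) < 2 * (d + 1) := by linarith
    have := hc _ ht
    rw [div_mul_eq_mul_div, ← sub_le_iff_le_add', zero_sub, le_div_iff₀ h2] at this
    nlinarith
  have hzero : ∀ z ∈ Z, (xs - a) z = 0 := by
    intro z hz
    have h1 := key z hz
    have h2 := key (-z) (Z.neg_mem hz)
    rw [map_neg] at h2
    linarith
  exact (hBmem x xs).mpr ⟨hxZ, a, ha, xs - a, hzero, by abel⟩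

end
end

section
/- Let A : X ⇉ X* be a maximal monotone operator that is Borwein–Wiersma decomposable. Then A is Asplund decomposable. -/
open Pointwise
open scoped Classical

noncomputable section

variable {X : Type*} [NormedAddCommGroup X] [NormedSpace ℝ X]

lemma gx_ne_top {g : X → EReal} (hg : ProperFun g) {x : X} {gs : Dl X}
    (hgs : gs ∈ subdiff g x) : g x ≠ ⊤ := by
  obtain ⟨y, hy⟩ := hg.2
  intro h
  have hxy := hgs y
  rw [h] at hxy
  have : ((gs (y - x) : ℝ) : EReal) + ⊤ = ⊤ := EReal.add_top_of_ne_bot (EReal.coe_ne_bot _)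
  rw [this] at hxy
  exact hy (top_le_iff.1 hxy)

lemma subgrad_real {g : X → EReal} (hg : ProperFun g) {x y : X} {gs gt : Dl X}
    (hx : gs ∈ subdiff g x) (hy : gt ∈ subdiff g y) :
    gs (y - x) ≤ (g y).toReal - (g x).toReal := by
  have hxt := gx_ne_top hg hx
  have hyt := gx_ne_top hg hy
  have h := hx y
  rw [← EReal.coe_toReal hxt (hg.1 x), ← EReal.coe_toReal hyt (hg.1 y),
    ← EReal.coe_add, EReal.coe_le_coe_iff] at h
  linarith

lemma subgrad_mono {g : X → EReal} (hg : ProperFun g) {x y : X} {gs gt : Dl X}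
    (hx : gs ∈ subdiff g x) (hy : gt ∈ subdiff g y) :
    0 ≤ (gs - gt) (x - y) := by
  have h1 := subgrad_real hg hx hy
  have h2 := subgrad_real hg hy hx
  simp only [map_sub, ContinuousLinearMap.sub_apply] at *
  linarith

lemma subgrad_transfer {g : X → EReal} (hg : ProperFun g) {x y : X} {gs gt : Dl X}
    (hx : gs ∈ subdiff g x) (hy : gt ∈ subdiff g y)
    (heq : (gs - gt) (x - y) = 0) : gs ∈ subdiff g y := by
  have hxt := gx_ne_top hg hx
  have hyt := gx_ne_top hg hy
  have h1 := subgrad_real hg hx hy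
  have h2 := subgrad_real hg hy hx
  have key : gs y - gs x = (g y).toReal - (g x).toReal := by
    simp only [map_sub, ContinuousLinearMap.sub_apply] at *
    linarith
  intro z
  have hz := hx z
  rw [← EReal.coe_toReal hxt (hg.1 x), ← EReal.coe_add] at hz
  rw [← EReal.coe_toReal hyt (hg.1 y), ← EReal.coe_add]
  have harith : gs (z - y) + (g y).toReal = gs (z - x) + (g x).toReal := by
    simp only [map_sub]
    linarith
  rw [harith]
  exact hz

lemma skew_pair {S : X → Set (Dl X)} (hlin : IsLinearRelation S) (hskew : SkewOp S)
    {x y : X} {xs ys : Dl X} (hx : xs ∈ S x) (hy : ys ∈ S y) :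
    (xs - ys) (x - y) = 0 := by
  have hneg : -ys ∈ S (-y) := by
    have := hlin.2.2 (-1) y ys hy
    have e1 : -ys = (-1 : ℝ) • ys := by ext v; simp
    have e2 : -y = (-1 : ℝ) • y := by simp
    rw [e1, e2]; exact this
  have hadd := hlin.2.1 x xs (-y) (-ys) hx hneg
  have := hskew _ _ hadd
  simpa [sub_eq_add_neg] using this

/-- Every Borwein–Wiersma decomposable maximal monotone operator
is Asplund decomposable. -/
theorem asplund_of_bw
    [CompleteSpace X] (hrefl : ReflexiveReal X)
    (A : X → Set (Dl X)) (hmax : MaxMonotoneOp A) (hbw : BWDecomposable A) :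
    AsplundDecomposable A := by
  obtain ⟨f, S, hfp, hflsc, hfconv, hlin, hskew, hsv, hA⟩ := hbw
  refine ⟨f, S, hfp, hflsc, hfconv, ?_, hA⟩
  intro g T hgp _ _ hT hdec
  have h0S : (0 : Dl X) ∈ S 0 := hlin.1
  have h0' : (0 : Dl X) ∈ subdiff g 0 + T 0 := by rw [← hdec]; exact h0S
  obtain ⟨p, hp, t0, ht0, hpt0⟩ := Set.mem_add.1 h0'
  refine ⟨p, ?_⟩
  have hsingle : ∀ x ∈ domOf S, ∀ gs ∈ subdiff g x, gs = p := by
    intro x hx gs hgs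
    obtain ⟨sx, hsx⟩ := hx
    have hsx' : sx ∈ subdiff g x + T x := by rw [← hdec]; exact hsx
    obtain ⟨a, ha, b, hb, hab⟩ := Set.mem_add.1 hsx'
    have hgsb : gs + b ∈ S x := by rw [hdec]; exact Set.add_mem_add hgs hb
    have hzero := skew_pair hlin hskew hgsb h0S
    have hmono1 : 0 ≤ (gs - p) (x - 0) := subgrad_mono hgp hgs hp
    have hmono2 : 0 ≤ (b - t0) (x - 0) := hT hb ht0
    have hptx : p x + t0 x = 0 := by
      rw [← ContinuousLinearMap.add_apply, hpt0]; rfl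
    have heq : (gs - p) (x - 0) = 0 := by
      simp only [ContinuousLinearMap.sub_apply, ContinuousLinearMap.add_apply,
        ContinuousLinearMap.zero_apply, sub_zero] at hzero hmono1 hmono2 ⊢
      linarith
    have hgs0 : gs ∈ subdiff g 0 := subgrad_transfer hgp hgs hp heq
    have h1 : gs + t0 ∈ S 0 := by rw [hdec]; exact Set.add_mem_add hgs0 ht0
    have h2 : p + t0 ∈ S 0 := by rw [hdec]; exact Set.add_mem_add hp ht0
    exact add_right_cancel (hsv 0 h1 h2)
  ext q
  simp only [Set.mem_iUnion, Set.mem_singleton_iff, exists_prop]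
  constructor
  · rintro ⟨x, hx, hq⟩
    exact hsingle x hx q hq
  · rintro rfl
    exact ⟨0, ⟨0, h0S⟩, hp⟩

end
end

section
/- Let f : X → (−∞,+∞] be proper, lower semicontinuous, and convex. Then ∂f is paramonotone: if x* ∈ ∂f(x), y* ∈ ∂f(y), and ⟨x* − y*, x − y⟩ = 0, then x* ∈ ∂f(y) and y* ∈ ∂f(x). -/
open Pointwise
open scoped Classical

noncomputable section

variable {X : Type*} [NormedAddCommGroup X] [NormedSpace ℝ X]

/-- paramonotonicity of subdifferentials.  If `x* ∈ ∂f(x)`,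
`y* ∈ ∂f(y)` and `⟨x* − y*, x − y⟩ = 0`, then `x* ∈ ∂f(y)` and `y* ∈ ∂f(x)`. -/
theorem subdiff_paramonotone
    [CompleteSpace X] (hrefl : ReflexiveReal X)
    (f : X → EReal) (hfp : ProperFun f) (hfl : LowerSemicontinuous f)
    (hfc : ConvexFun f)
    {x y : X} {xs ys : Dl X}
    (hx : xs ∈ subdiff f x) (hy : ys ∈ subdiff f y)
    (hperp : (xs - ys) (x - y) = 0) :
    xs ∈ subdiff f y ∧ ys ∈ subdiff f x := by
  obtain ⟨z₀, hz₀⟩ := hfp.2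
  -- finiteness of f x and f y
  have hfxt : f x ≠ ⊤ := by
    intro h
    have hh := hx z₀
    rw [h] at hh
    rw [EReal.add_top_of_ne_bot (by exact EReal.coe_ne_bot _)] at hh
    exact hz₀ (top_le_iff.mp hh)
  have hfyt : f y ≠ ⊤ := by
    intro h
    have hh := hy z₀
    rw [h] at hh
    rw [EReal.add_top_of_ne_bot (by exact EReal.coe_ne_bot _)] at hh
    exact hz₀ (top_le_iff.mp hh)
  set a : ℝ := (f x).toReal with ha
  set b : ℝ := (f y).toReal with hb
  have hfx : f x = (a : EReal) := (EReal.coe_toReal hfxt (hfp.1 x)).symm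
  have hfy : f y = (b : EReal) := (EReal.coe_toReal hfyt (hfp.1 y)).symm
  -- real inequalities
  have h1 : xs (y - x) + a ≤ b := by
    have := hx y
    rw [hfx, hfy, ← EReal.coe_add, EReal.coe_le_coe_iff] at this
    exact this
  have h2 : ys (x - y) + b ≤ a := by
    have := hy x
    rw [hfy, hfx, ← EReal.coe_add, EReal.coe_le_coe_iff] at this
    exact this
  have hp : xs x - ys x - (xs y - ys y) = 0 := by
    simpa [map_sub] using hperp
  have e1 : xs (y - x) + a = b := by
    rw [map_sub] at h1 h2 ⊢
    linarith
  have e2 : ys (x - y) + b = a := by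
    rw [map_sub] at h1 h2 ⊢
    linarith
  constructor
  · intro z
    have hh := hx z
    rw [hfx] at hh
    rw [hfy]
    have : xs (z - y) + b = xs (z - x) + a := by
      rw [map_sub, map_sub]
      rw [map_sub] at e1
      linarith
    calc (xs (z - y) : EReal) + (b : EReal) = ((xs (z - y) + b : ℝ) : EReal) := by
          rw [EReal.coe_add]
      _ = ((xs (z - x) + a : ℝ) : EReal) := by rw [this]
      _ = (xs (z - x) : EReal) + (a : EReal) := by rw [EReal.coe_add]
      _ ≤ f z := hh
  · intro z
    have hh := hy z
    rw [hfy] at hh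
    rw [hfx]
    have : ys (z - x) + a = ys (z - y) + b := by
      rw [map_sub, map_sub]
      rw [map_sub] at e2
      linarith
    calc (ys (z - x) : EReal) + (a : EReal) = ((ys (z - x) + a : ℝ) : EReal) := by
          rw [EReal.coe_add]
      _ = ((ys (z - y) + b : ℝ) : EReal) := by rw [this]
      _ = (ys (z - y) : EReal) + (b : EReal) := by rw [EReal.coe_add]
      _ ≤ f z := hh

end
end

section
/- Let A : X ⇉ X* be a maximal monotone linear relation such that A is skew, and let S be a single-valued linear selection of A. Then A = ∂ι_{\overline{dom A}} + S (pointwise Minkowski sum), where \overline{dom A} is the closure of dom A; in particular this is a Borwein–Wiersma decomposition of A. -/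
open Pointwise
open scoped Classical

noncomputable section

variable {X : Type*} [NormedAddCommGroup X] [NormedSpace ℝ X]

/-- Let `A` be a maximal monotone skew linear relation and `S` a
single-valued linear selection of `A`.  Then `A = ∂ι_{cl(dom A)} + S`, a
Borwein–Wiersma decomposition of `A`. -/
theorem skew_bw_decomposition
    [CompleteSpace X] (hrefl : ReflexiveReal X)
    (A S : X → Set (Dl X)) (hlin : IsLinearRelation A) (hmax : MaxMonotoneOp A)
    (hskew : SkewOp A) (hS : IsLinearSelection S A) :
    ∀ x, A x = subdiff (indFun (closure (domOf A))) x + S x := by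
  obtain ⟨hlin0, hlinadd, hlinsmul⟩ := hlin
  obtain ⟨hSlin, hSsingle, hSdom, hSsub⟩ := hS
  -- the domain as a submodule
  set D : Submodule ℝ X :=
    { carrier := domOf A
      add_mem' := fun ⟨us, hu⟩ ⟨vs, hv⟩ => ⟨us + vs, hlinadd _ _ _ _ hu hv⟩
      zero_mem' := ⟨0, hlin0⟩
      smul_mem' := fun c u ⟨us, hu⟩ => ⟨c • us, hlinsmul c _ _ hu⟩ } with hD
  have hDcar : (D : Set X) = domOf A := rfl
  set C : Submodule ℝ X := D.topologicalClosure with hC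
  have hCcar : (C : Set X) = closure (domOf A) := rfl
  -- cross identity from skewness
  have cross : ∀ x xs y ys, xs ∈ A x → ys ∈ A y → xs y + ys x = 0 := by
    intro x xs y ys hx hy
    have h1 := hskew _ _ (hlinadd _ _ _ _ hx hy)
    have h2 := hskew _ _ hx
    have h3 := hskew _ _ hy
    simp only [ContinuousLinearMap.add_apply, map_add] at h1
    linarith
  -- difference of two values of A at the same point kills the domain
  have diffzero : ∀ x as bs, as ∈ A x → bs ∈ A x → ∀ y ∈ domOf A, (as - bs) y = 0 := by
    intro x as bs ha hb y hy
    have hzero : as - bs ∈ A 0 := by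
      have := hlinadd x as ((-1 : ℝ) • x) ((-1 : ℝ) • bs) ha (hlinsmul (-1) x bs hb)
      have hnb : ((-1 : ℝ) • bs) = -bs := by ext; simp
      simpa [neg_one_smul, sub_eq_add_neg, hnb] using this
    obtain ⟨ys, hys⟩ := hy
    have := cross 0 (as - bs) y ys hzero hys
    simpa using this
  -- characterization of the subdifferential of the indicator
  have subdiff_char : ∀ x ∈ closure (domOf A), ∀ xs : Dl X,
      xs ∈ subdiff (indFun (closure (domOf A))) x ↔ ∀ z ∈ closure (domOf A), xs z = 0 := by
    intro x hx xs
    have hxC : x ∈ C := hx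
    constructor
    · intro h z hz
      have hzC : z ∈ C := hz
      have hadd : x + z ∈ closure (domOf A) := add_mem hxC hzC
      have hsub : x - z ∈ closure (domOf A) := sub_mem hxC hzC
      have h1 := h (x + z)
      have h2 := h (x - z)
      rw [add_sub_cancel_left] at h1
      rw [sub_sub_cancel_left] at h2
      simp only [indFun, if_pos hx, if_pos hadd, add_zero] at h1
      simp only [indFun, if_pos hx, if_pos hsub, add_zero, map_neg] at h2
      have h1' : xs z ≤ 0 := by exact_mod_cast h1
      have h2' : -(xs z) ≤ 0 := by exact_mod_cast h2
      linarith
    · intro h y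
      by_cases hy : y ∈ closure (domOf A)
      · have : xs (y - x) = 0 := by
          rw [map_sub, h y hy, h x hx, sub_zero]
        simp [indFun, if_pos hx, if_pos hy, this]
      · simp [indFun, if_neg hy]
  -- vanishing on domain extends to closure
  have van_closure : ∀ xs : Dl X, (∀ z ∈ domOf A, xs z = 0) →
      ∀ z ∈ closure (domOf A), xs z = 0 := by
    intro xs hxs z hz
    have hcl : closure (domOf A) ⊆ xs ⁻¹' {0} :=
      closure_minimal (fun w hw => hxs w hw) (isClosed_singleton.preimage xs.continuous)
    exact hcl hz
  intro x
  by_cases hx : x ∈ domOf A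
  · have hxS : x ∈ domOf S := by rw [hSdom]; exact hx
    obtain ⟨sx, hsx⟩ := hxS
    have hsxA : sx ∈ A x := hSsub x hsx
    have hxcl : x ∈ closure (domOf A) := subset_closure hx
    ext as
    constructor
    · intro ha
      refine Set.mem_add.mpr ⟨as - sx, ?_, sx, hsx, by abel⟩
      rw [subdiff_char x hxcl]
      exact van_closure _ (diffzero x as sx ha hsxA)
    · intro ha
      obtain ⟨u, hu, v, hv, rfl⟩ := Set.mem_add.mp ha
      have hvA : v ∈ A x := hSsub x hv
      have huz : ∀ z ∈ closure (domOf A), u z = 0 := (subdiff_char x hxcl u).mp hu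
      refine hmax.2 x (u + v) ?_
      intro y ys hys
      have hyd : y ∈ domOf A := ⟨ys, hys⟩
      have hux : u x = 0 := huz x hxcl
      have huy : u y = 0 := huz y (subset_closure hyd)
      have hvx : v x = 0 := hskew _ _ hvA
      have hyy : ys y = 0 := hskew _ _ hys
      have hcr : v y + ys x = 0 := cross x v y ys hvA hys
      simp only [ContinuousLinearMap.sub_apply, ContinuousLinearMap.add_apply, map_sub]
      linarith
  · have hxS : x ∉ domOf S := by rw [hSdom]; exact hx
    have hA : A x = ∅ := Set.not_nonempty_iff_eq_empty.mp hx
    have hSx : S x = ∅ := Set.not_nonempty_iff_eq_empty.mp hxS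
    rw [hA, hSx, Set.add_empty]

end
end

section
/- Let A : X ⇉ X* be a maximal monotone linear relation such that A is symmetric. Then A = ∂(\overline{q_A}), i.e. Ax = ∂(\overline{q_A})(x) for every x ∈ X; moreover, for every x* ∈ X*, A^{-1}x* = {x ∈ X : the canonical image of x in X** belongs to ∂(q_A^*)(x*)}, where q_A^* is the Fenchel conjugate of q_A. In particular both A and A^{-1} are subdifferential operators, hence Borwein–Wiersma decomposable with zero skew part. -/
open Pointwise
open scoped Classical

noncomputable section

variable {X : Type*} [NormedAddCommGroup X] [NormedSpace ℝ X]

section Helpers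

variable {X : Type*} [NormedAddCommGroup X] [NormedSpace ℝ X]

lemma sym_pair' {A : X → Set (Dl X)} (hsym : SymOp A) {x y : X} {xs ys : Dl X}
    (hx : xs ∈ A x) (hy : ys ∈ A y) : xs y = ys x :=
  hsym (a := (x, xs)) hx y ys hy

lemma key_ineq' {A : X → Set (Dl X)} (hmono : MonotoneOp A) (hsym : SymOp A)
    {x y : X} {xs ys : Dl X} (hx : xs ∈ A x) (hy : ys ∈ A y) :
    xs y - 2⁻¹ * ys y ≤ 2⁻¹ * xs x := by
  have h1 := hmono hx hy
  have h2 : xs y = ys x := sym_pair' hsym hx hy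
  simp only [ContinuousLinearMap.sub_apply, map_sub] at h1
  linarith

lemma qA_empty' {A : X → Set (Dl X)} {x : X} (h : A x = ∅) : qA A x = ⊤ := by
  have : {v : EReal | ∃ xs ∈ A x, v = (((2 : ℝ)⁻¹ * xs x : ℝ) : EReal)} = ∅ := by
    simp [h]
  rw [qA, this, sInf_empty]

lemma qA_eq' {A : X → Set (Dl X)} (hsym : SymOp A) {x : X} {xs : Dl X} (hx : xs ∈ A x) :
    qA A x = ((2⁻¹ * xs x : ℝ) : EReal) := by
  have hset : {v : EReal | ∃ ys ∈ A x, v = (((2 : ℝ)⁻¹ * ys x : ℝ) : EReal)} =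
      {((2⁻¹ * xs x : ℝ) : EReal)} := by
    ext v
    constructor
    · rintro ⟨ys, hys, rfl⟩
      have h := sym_pair' hsym hys hx
      simp [h]
    · rintro rfl
      exact ⟨xs, hx, rfl⟩
  rw [qA, hset, sInf_singleton]

lemma qA_zero' {A : X → Set (Dl X)} (hsym : SymOp A) (h0 : (0 : Dl X) ∈ A 0) :
    qA A 0 = 0 := by
  rw [qA_eq' hsym h0]
  simp

lemma qA_nonneg' {A : X → Set (Dl X)} (hmono : MonotoneOp A) (h0 : (0 : Dl X) ∈ A 0)
    (x : X) : 0 ≤ qA A x := by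
  apply le_sInf
  rintro v ⟨xs, hxs, rfl⟩
  have h := hmono hxs h0
  simp only [ContinuousLinearMap.sub_apply, ContinuousLinearMap.zero_apply, sub_zero,
    map_sub, map_zero] at h
  have : (0 : ℝ) ≤ 2⁻¹ * xs x := by linarith
  exact_mod_cast this

lemma affine_le_qA' {A : X → Set (Dl X)} (hmono : MonotoneOp A) (hsym : SymOp A)
    {x : X} {xs : Dl X} (hx : xs ∈ A x) (y : X) :
    ((xs y - 2⁻¹ * xs x : ℝ) : EReal) ≤ qA A y := by
  rcases Set.eq_empty_or_nonempty (A y) with h | ⟨ys, hys⟩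
  · rw [qA_empty' h]; exact le_top
  · rw [qA_eq' hsym hys]
    have h := key_ineq' hmono hsym hx hys
    exact_mod_cast (by linarith : xs y - 2⁻¹ * xs x ≤ 2⁻¹ * ys y)

lemma fenchel_qA_eq' {A : X → Set (Dl X)} (hmono : MonotoneOp A) (hsym : SymOp A)
    {x : X} {xs : Dl X} (hx : xs ∈ A x) :
    fenchel (qA A) xs = ((2⁻¹ * xs x : ℝ) : EReal) := by
  apply le_antisymm
  · apply iSup_le
    intro w
    rcases Set.eq_empty_or_nonempty (A w) with h | ⟨ws, hws⟩
    · rw [qA_empty' h, EReal.sub_top]; exact bot_le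
    · rw [qA_eq' hsym hws, ← EReal.coe_sub]
      have h := key_ineq' hmono hsym hx hws
      exact_mod_cast h
  · have h : ((2⁻¹ * xs x : ℝ) : EReal) = (xs x : EReal) - qA A x := by
      rw [qA_eq' hsym hx, ← EReal.coe_sub]
      norm_cast
      ring
    rw [h]
    exact le_iSup (fun w => (xs w : EReal) - qA A w) x

lemma lscHull_le' (f : X → EReal) (x : X) : lscHull f x ≤ f x := by
  apply sSup_le
  rintro v ⟨g, hg, hgle, rfl⟩
  exact hgle x

lemma le_lscHull' {f g : X → EReal} (hg : LowerSemicontinuous g) (hgle : ∀ y, g y ≤ f y)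
    (x : X) : g x ≤ lscHull f x :=
  le_sSup ⟨g, hg, hgle, rfl⟩

lemma lscHull_lsc' (f : X → EReal) : LowerSemicontinuous (lscHull f) := by
  intro x v hv
  obtain ⟨w, ⟨g, hg, hgle, rfl⟩, hvw⟩ := lt_sSup_iff.1 hv
  filter_upwards [hg x _ hvw] with y hy
  exact hy.trans_le (le_lscHull' hg hgle y)

lemma lsc_affine_sub' (φ : Dl X) (c : EReal) :
    LowerSemicontinuous (fun z : X => (φ z : EReal) - c) := by
  induction c using EReal.rec with
  | bot =>
      have h : (fun z : X => (φ z : EReal) - ⊥) = fun _ => (⊤ : EReal) := by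
        ext z; exact EReal.coe_sub_bot _
      rw [h]; exact lowerSemicontinuous_const
  | coe c =>
      have h : (fun z : X => (φ z : EReal) - (c : ℝ)) = fun z => ((φ z - c : ℝ) : EReal) := by
        ext z; norm_cast
      rw [h]
      exact (continuous_coe_real_ereal.comp (φ.continuous.sub continuous_const)).lowerSemicontinuous
  | top =>
      have h : (fun z : X => (φ z : EReal) - ⊤) = fun _ => (⊥ : EReal) := by
        ext z; exact EReal.sub_top _
      rw [h]; exact lowerSemicontinuous_const

lemma A_subset_subdiff_hull' {A : X → Set (Dl X)} (hmono : MonotoneOp A) (hsym : SymOp A)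
    {x : X} {xs : Dl X} (hx : xs ∈ A x) : xs ∈ subdiff (lscHull (qA A)) x := by
  simp only [subdiff, Set.mem_setOf_eq]
  intro y
  have hgl : LowerSemicontinuous (fun z : X => ((xs z - 2⁻¹ * xs x : ℝ) : EReal)) := by
    exact (continuous_coe_real_ereal.comp (xs.continuous.sub continuous_const)).lowerSemicontinuous
  have hgle : ∀ z, ((xs z - 2⁻¹ * xs x : ℝ) : EReal) ≤ qA A z :=
    fun z => affine_le_qA' hmono hsym hx z
  have h1 : lscHull (qA A) x ≤ ((2⁻¹ * xs x : ℝ) : EReal) :=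
    (lscHull_le' _ x).trans (qA_eq' hsym hx).le
  calc ((xs (y - x) : ℝ) : EReal) + lscHull (qA A) x
      ≤ ((xs (y - x) : ℝ) : EReal) + ((2⁻¹ * xs x : ℝ) : EReal) := add_le_add_right h1 _
    _ = ((xs y - 2⁻¹ * xs x : ℝ) : EReal) := by
        norm_cast
        rw [map_sub]
        ring
    _ ≤ lscHull (qA A) y := le_lscHull' hgl hgle y

lemma subdiff_subset_A' {A : X → Set (Dl X)} (hmax : MaxMonotoneOp A) (hsym : SymOp A)
    (h0 : (0 : Dl X) ∈ A 0)
    {h : X → EReal} (hnn : ∀ y, 0 ≤ h y) (hle : ∀ y, h y ≤ qA A y)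
    (hsub : ∀ y ys, ys ∈ A y → ys ∈ subdiff h y) {x : X} {xs : Dl X}
    (hx : xs ∈ subdiff h x) : xs ∈ A x := by
  simp only [subdiff, Set.mem_setOf_eq] at hx
  apply hmax.2
  intro y ys hys
  have h00 : h 0 ≤ 0 := (hle 0).trans (qA_zero' hsym h0).le
  have hxtop : h x ≠ ⊤ := by
    intro htop
    have hx0 := hx 0
    rw [htop, EReal.add_top_of_ne_bot (EReal.coe_ne_bot _)] at hx0
    have : (⊤ : EReal) ≤ 0 := hx0.trans h00
    simp at this
  have hxbot : h x ≠ ⊥ := ((lt_of_lt_of_le (by simp) (hnn x))).ne'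
  have hytop : h y ≠ ⊤ :=
    (((hle y).trans (qA_eq' hsym hys).le).trans_lt (EReal.coe_lt_top _)).ne
  have hybot : h y ≠ ⊥ := ((lt_of_lt_of_le (by simp) (hnn y))).ne'
  have hp := EReal.coe_toReal hxtop hxbot
  have hq := EReal.coe_toReal hytop hybot
  have h1 := hx y
  have h2 := hsub y ys hys x
  rw [← hp, ← hq] at h1 h2
  have h1' : xs (y - x) + (h x).toReal ≤ (h y).toReal := by exact_mod_cast h1
  have h2' : ys (x - y) + (h y).toReal ≤ (h x).toReal := by exact_mod_cast h2
  simp only [map_sub] at h1' h2'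
  simp only [ContinuousLinearMap.sub_apply, map_sub]
  linarith
lemma le_fenchel' (f : X → EReal) (xs : Dl X) (x : X) :
    (xs x : EReal) - f x ≤ fenchel f xs :=
  le_iSup (fun w => ((xs w : EReal) - f w)) x

end Helpers
/-- Let `A` be a maximal monotone symmetric linear relation.
Then `A = ∂(cl q_A)`; moreover `A⁻¹ x* = {x : ι(x) ∈ ∂(q_A^*)(x*)}` where `ι` is
the canonical injection of `X` into `X**`; in particular `A` is Borwein–Wiersma
decomposable (with zero skew part). -/
theorem symmetric_maxMonotone_is_subdifferential
    [CompleteSpace X] (hrefl : ReflexiveReal X)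
    (A : X → Set (Dl X)) (hlin : IsLinearRelation A) (hmax : MaxMonotoneOp A)
    (hsym : SymOp A) :
    (∀ x, A x = subdiff (lscHull (qA A)) x) ∧
    (∀ xs : Dl X, {x : X | xs ∈ A x} =
      {x : X | NormedSpace.inclusionInDoubleDual ℝ X x ∈ subdiff (fenchel (qA A)) xs}) ∧
    BWDecomposable A := by
  obtain ⟨h0A, haddA, hsmulA⟩ := hlin
  have hmono := hmax.1
  have hullnn : ∀ z, (0 : EReal) ≤ lscHull (qA A) z := fun z =>
    le_lscHull' lowerSemicontinuous_const (fun y => qA_nonneg' hmono h0A y) z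
  have claim1 : ∀ x, A x = subdiff (lscHull (qA A)) x := by
    intro x
    ext xs
    constructor
    · intro hx; exact A_subset_subdiff_hull' hmono hsym hx
    · intro hx
      exact subdiff_subset_A' hmax hsym h0A hullnn (fun y => lscHull_le' _ y)
        (fun y ys hys => A_subset_subdiff_hull' hmono hsym hys) hx
  refine ⟨claim1, ?_, ?_⟩
  · -- claim 2
    intro xs
    ext x
    simp only [Set.mem_setOf_eq]
    constructor
    · intro hx
      simp only [subdiff, Set.mem_setOf_eq]
      intro zs
      rw [fenchel_qA_eq' hmono hsym hx, NormedSpace.dual_def]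
      have key : ((zs x : ℝ) : EReal) - qA A x ≤ fenchel (qA A) zs := le_fenchel' _ zs x
      rw [qA_eq' hsym hx, ← EReal.coe_sub] at key
      refine le_trans (le_of_eq ?_) key
      norm_cast
      simp only [ContinuousLinearMap.sub_apply]
      ring
    · intro hx
      simp only [subdiff, Set.mem_setOf_eq] at hx
      apply hmax.2
      intro y ys hys
      have h1 := hx ys
      rw [fenchel_qA_eq' hmono hsym hys, NormedSpace.dual_def] at h1
      have low : ((xs y - 2⁻¹ * ys y : ℝ) : EReal) ≤ fenchel (qA A) xs := by
        have hls := le_fenchel' (qA A) xs y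
        rwa [qA_eq' hsym hys, ← EReal.coe_sub] at hls
      have htop : fenchel (qA A) xs ≠ ⊤ := by
        intro ht
        rw [ht, EReal.add_top_of_ne_bot (EReal.coe_ne_bot _)] at h1
        exact EReal.coe_ne_top _ (top_le_iff.1 h1)
      have hbot : fenchel (qA A) xs ≠ ⊥ := (lt_of_lt_of_le (EReal.bot_lt_coe _) low).ne'
      rw [← EReal.coe_toReal htop hbot] at h1 low
      have h1' : (ys - xs) x + (fenchel (qA A) xs).toReal ≤ 2⁻¹ * ys y := by
        exact_mod_cast h1
      have low' : xs y - 2⁻¹ * ys y ≤ (fenchel (qA A) xs).toReal := by exact_mod_cast low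
      simp only [ContinuousLinearMap.sub_apply, map_sub] at h1' ⊢
      linarith
  · -- claim 3
    set F : X → EReal := fun z => ⨆ ws : Dl X, ((ws z : EReal) - fenchel (qA A) ws) with hF
    have le_F : ∀ (z : X) (ws : Dl X), (ws z : EReal) - fenchel (qA A) ws ≤ F z :=
      fun z ws => le_iSup (fun w : Dl X => ((w z : EReal) - fenchel (qA A) w)) ws
    have hq0 : fenchel (qA A) 0 = 0 := by
      rw [fenchel_qA_eq' hmono hsym h0A]; simp
    have hFnn : ∀ z, (0 : EReal) ≤ F z := by
      intro z
      have h := le_F z 0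
      simpa [hq0] using h
    have hfen_nn : ∀ ws : Dl X, (0 : EReal) ≤ fenchel (qA A) ws := by
      intro ws
      have h := le_fenchel' (qA A) ws 0
      simpa [qA_zero' hsym h0A, map_zero] using h
    have hFle : ∀ z, F z ≤ qA A z := by
      intro z
      apply iSup_le
      intro ws
      rcases Set.eq_empty_or_nonempty (A z) with h | ⟨zs, hzs⟩
      · rw [qA_empty' h]; exact le_top
      · rw [qA_eq' hsym hzs]
        have low : ((ws z - 2⁻¹ * zs z : ℝ) : EReal) ≤ fenchel (qA A) ws := by
          have hls := le_fenchel' (qA A) ws z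
          rwa [qA_eq' hsym hzs, ← EReal.coe_sub] at hls
        by_cases htop : fenchel (qA A) ws = ⊤
        · rw [htop, EReal.sub_top]; exact bot_le
        · have hbot : fenchel (qA A) ws ≠ ⊥ :=
            (lt_of_lt_of_le (EReal.bot_lt_coe _) low).ne'
          rw [← EReal.coe_toReal htop hbot] at low ⊢
          have low' : ws z - 2⁻¹ * zs z ≤ (fenchel (qA A) ws).toReal := by exact_mod_cast low
          rw [← EReal.coe_sub]
          exact_mod_cast (by linarith : ws z - (fenchel (qA A) ws).toReal ≤ 2⁻¹ * zs z)
    have hAF : ∀ y ys, ys ∈ A y → ys ∈ subdiff F y := by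
      intro y ys hys
      simp only [subdiff, Set.mem_setOf_eq]
      intro w
      have h1 : F y ≤ ((2⁻¹ * ys y : ℝ) : EReal) := (hFle y).trans (qA_eq' hsym hys).le
      have h2 : ((ys w - 2⁻¹ * ys y : ℝ) : EReal) ≤ F w := by
        have h := le_F w ys
        rwa [fenchel_qA_eq' hmono hsym hys, ← EReal.coe_sub] at h
      calc ((ys (w - y) : ℝ) : EReal) + F y
          ≤ ((ys (w - y) : ℝ) : EReal) + ((2⁻¹ * ys y : ℝ) : EReal) := add_le_add_right h1 _
        _ = ((ys w - 2⁻¹ * ys y : ℝ) : EReal) := by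
            norm_cast
            rw [map_sub]
            ring
        _ ≤ F w := h2
    have hFlsc : LowerSemicontinuous F :=
      lowerSemicontinuous_iSup (fun ws : Dl X => lsc_affine_sub' ws (fenchel (qA A) ws))
    have hFconv : ConvexFun F := by
      intro x y a b ha hb hab
      apply iSup_le
      intro ws
      by_cases htop : fenchel (qA A) ws = ⊤
      · rw [htop, EReal.sub_top]; exact bot_le
      · have hbot : fenchel (qA A) ws ≠ ⊥ :=
          (lt_of_lt_of_le (by simp) (hfen_nn ws)).ne'
        have hcs : fenchel (qA A) ws = ((fenchel (qA A) ws).toReal : EReal) :=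
          (EReal.coe_toReal htop hbot).symm
        set s := (fenchel (qA A) ws).toReal with hs
        have e1 : (ws (a • x + b • y) : EReal) - fenchel (qA A) ws
            = (a : EReal) * ((ws x : EReal) - fenchel (qA A) ws)
              + (b : EReal) * ((ws y : EReal) - fenchel (qA A) ws) := by
          rw [hcs]
          norm_cast
          rw [map_add, map_smul, map_smul, smul_eq_mul, smul_eq_mul]
          linear_combination s * hab
        rw [e1]
        exact add_le_add
          (mul_le_mul_of_nonneg_left (le_F x ws) (by exact_mod_cast ha))
          (mul_le_mul_of_nonneg_left (le_F y ws) (by exact_mod_cast hb))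
    have hF0 : F 0 ≤ 0 := (hFle 0).trans (qA_zero' hsym h0A).le
    have hsubF : ∀ x, subdiff F x = A x := by
      intro x
      ext xs
      constructor
      · intro hx
        exact subdiff_subset_A' hmax hsym h0A hFnn hFle hAF hx
      · intro hx
        exact hAF x xs hx
    refine ⟨F, fun _ => ({0} : Set (Dl X)), ⟨fun z => (lt_of_lt_of_le (by simp) (hFnn z)).ne',
      ⟨0, fun h => by rw [h] at hF0; simp at hF0⟩⟩, hFlsc, hFconv,
      ⟨rfl, fun x xs y ys hx hy => by simp_all, fun c x xs hx => by simp_all⟩,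
      fun x xs hx => by simp_all, fun x => Set.subsingleton_singleton, ?_⟩
    intro x
    have hadd0 : subdiff F x + ({0} : Set (Dl X)) = subdiff F x := by
      simp [Set.add_singleton]
    rw [hadd0, hsubF]
end
end
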